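/- arXiv:2008.09231 — 8 statements merged into one kernel-verified Lean document; each statement's English description precedes it below -/
import Mathlib

section
/- Persistence Lemma: In every DIBI model, i.e., a DIBI frame (X, ⊑, ⊕, ⊙, E) together with a persistent valuation V, for every DIBI formula P and all states x, y ∈ X, if x ⊨ P and x ⊑ y, then y ⊨ P. -/
/-- A DIBI frame: a preorder `le` on `X`, non-deterministic binary operations
`oplus` and `odot`, and a set of units `E`, satisfying the twelve DIBI frame conditions. -/
structure IsDIBIFrame {X : Type*} (le : X → X → Prop) (oplus odot : X → X → Set X)
    (E : Set X) : Prop where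
  le_refl : ∀ x, le x x
  le_trans : ∀ x y z, le x y → le y z → le x z
  oplus_down : ∀ x y z x' y', z ∈ oplus x y → le x' x → le y' y →
    ∃ z', le z' z ∧ z' ∈ oplus x' y'
  odot_up : ∀ x y z z', z ∈ odot x y → le z z' →
    ∃ x' y', le x x' ∧ le y y' ∧ z' ∈ odot x' y'
  oplus_comm : ∀ x y z, z ∈ oplus x y → z ∈ oplus y x
  oplus_assoc : ∀ x y z t w, w ∈ oplus t z → t ∈ oplus x y →
    ∃ s, s ∈ oplus y z ∧ w ∈ oplus x s
  oplus_unit_exists : ∀ x, ∃ e ∈ E, x ∈ oplus e x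
  oplus_unit_coherence : ∀ e x y, e ∈ E → x ∈ oplus y e → le y x
  odot_assoc : ∀ x y z w, (∃ t, w ∈ odot t z ∧ t ∈ odot x y) ↔
    (∃ s, s ∈ odot y z ∧ w ∈ odot x s)
  odot_unit_exists_left : ∀ x, ∃ e ∈ E, x ∈ odot e x
  odot_unit_exists_right : ∀ x, ∃ e ∈ E, x ∈ odot x e
  odot_coherence_right : ∀ e x y, e ∈ E → x ∈ odot y e → le y x
  unit_closure : ∀ e e', e ∈ E → le e e' → e' ∈ E
  rev_exchange : ∀ x y z y1 y2 z1 z2, x ∈ oplus y z → y ∈ odot y1 y2 → z ∈ odot z1 z2 →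
    ∃ u v, u ∈ oplus y1 z1 ∧ v ∈ oplus y2 z2 ∧ x ∈ odot u v
/-- Formulas of the logic DIBI. -/
inductive Formula (AP : Type*) : Type _ where
  | atom : AP → Formula AP
  | top : Formula AP
  | bot : Formula AP
  | emp : Formula AP            -- the multiplicative unit I
  | and : Formula AP → Formula AP → Formula AP
  | or : Formula AP → Formula AP → Formula AP
  | imp : Formula AP → Formula AP → Formula AP
  | sep : Formula AP → Formula AP → Formula AP      -- P ∗ Q
  | wand : Formula AP → Formula AP → Formula AP     -- P -∗ Q
  | tri : Formula AP → Formula AP → Formula AP      -- P ▷ Q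
  | triimpR : Formula AP → Formula AP → Formula AP  -- P ▷→ Q
  | triimpL : Formula AP → Formula AP → Formula AP  -- P ▷- Q
/-- Kripke satisfaction for DIBI formulas in a DIBI frame with valuation `V`. -/
def Sat {X AP : Type*} (le : X → X → Prop) (oplus odot : X → X → Set X) (E : Set X)
    (V : AP → Set X) : Formula AP → X → Prop
  | .atom p, x => x ∈ V p
  | .top, _ => True
  | .bot, _ => False
  | .emp, x => x ∈ E
  | .and P Q, x => Sat le oplus odot E V P x ∧ Sat le oplus odot E V Q x
  | .or P Q, x => Sat le oplus odot E V P x ∨ Sat le oplus odot E V Q x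
  | .imp P Q, x => ∀ y, le x y → Sat le oplus odot E V P y → Sat le oplus odot E V Q y
  | .sep P Q, x => ∃ x' y z, le x' x ∧ x' ∈ oplus y z ∧
      Sat le oplus odot E V P y ∧ Sat le oplus odot E V Q z
  | .wand P Q, x => ∀ y z, z ∈ oplus x y →
      Sat le oplus odot E V P y → Sat le oplus odot E V Q z
  | .tri P Q, x => ∃ y z, x ∈ odot y z ∧
      Sat le oplus odot E V P y ∧ Sat le oplus odot E V Q z
  | .triimpR P Q, x => ∀ x' y z, le x x' → z ∈ odot x' y →
      Sat le oplus odot E V P y → Sat le oplus odot E V Q z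
  | .triimpL P Q, x => ∀ x' y z, le x x' → z ∈ odot y x' →
      Sat le oplus odot E V P y → Sat le oplus odot E V Q z

/-!
Induction on the formula. The connectives that quantify over `⊑`-successors (`→`, `▷→`, `▷-`)
and `∗`, whose clause already closes downwards, are persistent by transitivity of `⊑` alone;
`-∗` is persistent by (⊕ Down-Closed) and `▷` by (⊙ Up-Closed).
-/

def UpwardClosed {X : Type*} (le : X → X → Prop) (S : X → Prop) : Prop :=
  ∀ x y, S x → le x y → S y

namespace IsDIBIFrame

variable {X AP : Type*} {le : X → X → Prop} {oplus odot : X → X → Set X} {E : Set X}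

theorem upwardClosed_wand (hF : IsDIBIFrame le oplus odot E) {P Q : X → Prop}
    (hQ : UpwardClosed le Q) :
    UpwardClosed le (fun x => ∀ y z, z ∈ oplus x y → P y → Q z) := by
  intro x x' hx hxx' y z hz hPy
  obtain ⟨w, hwz, hw⟩ := hF.oplus_down x' y z x y hz hxx' (hF.le_refl y)
  exact hQ w z (hx y w hw hPy) hwz

theorem upwardClosed_tri (hF : IsDIBIFrame le oplus odot E) {P Q : X → Prop}
    (hP : UpwardClosed le P) (hQ : UpwardClosed le Q) :
    UpwardClosed le (fun x => ∃ y z, x ∈ odot y z ∧ P y ∧ Q z) := by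
  rintro x x' ⟨y, z, hx, hPy, hQz⟩ hxx'
  obtain ⟨y', z', hyy', hzz', hx'⟩ := hF.odot_up y z x x' hx hxx'
  exact ⟨y', z', hx', hP y y' hPy hyy', hQ z z' hQz hzz'⟩

theorem upwardClosed_sat (hF : IsDIBIFrame le oplus odot E) {V : AP → Set X}
    (hV : ∀ p, UpwardClosed le (· ∈ V p)) (P : Formula AP) :
    UpwardClosed le (Sat le oplus odot E V P) := by
  induction P with
  | atom p => exact hV p
  | top => exact fun _ _ _ _ => trivial
  | bot => exact fun _ _ h _ => h
  | emp => exact hF.unit_closure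
  | and P Q hP hQ => exact fun x y hx hxy => ⟨hP x y hx.1 hxy, hQ x y hx.2 hxy⟩
  | or P Q hP hQ => exact fun x y hx hxy => hx.imp (hP x y · hxy) (hQ x y · hxy)
  | imp P Q _ _ => exact fun x y hx hxy z hyz => hx z (hF.le_trans x y z hxy hyz)
  | sep P Q _ _ =>
    exact fun x y ⟨x', a, b, hx'x, hab, ha, hb⟩ hxy =>
      ⟨x', a, b, hF.le_trans x' x y hx'x hxy, hab, ha, hb⟩
  | wand P Q _ hQ => exact hF.upwardClosed_wand hQ
  | tri P Q hP hQ => exact hF.upwardClosed_tri hP hQ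
  | triimpR P Q _ _ =>
    exact fun x y hx hxy y' w z hyy' => hx y' w z (hF.le_trans x y y' hxy hyy')
  | triimpL P Q _ _ =>
    exact fun x y hx hxy y' w z hyy' => hx y' w z (hF.le_trans x y y' hxy hyy')

end IsDIBIFrame

/-- **Persistence Lemma.** In every DIBI model (a DIBI frame together with a
persistent valuation), satisfaction of every formula is preserved upwards along
the preorder: if `x ⊨ P` and `x ⊑ y` then `y ⊨ P`. -/
theorem persistence_lemma {X AP : Type*} (le : X → X → Prop)
    (oplus odot : X → X → Set X) (E : Set X)
    (hFrame : IsDIBIFrame le oplus odot E)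
    (V : AP → Set X) (hV : ∀ p x y, x ∈ V p → le x y → y ∈ V p)
    (P : Formula AP) (x y : X)
    (hx : Sat le oplus odot E V P x) (hxy : le x y) :
    Sat le oplus odot E V P y :=
  hFrame.upwardClosed_sat hV P x y hx hxy
end

section
/- For every DIBI frame X = (X, ⊑, ⊕, ⊙, E), the complex algebra Com(X), whose carrier is the set of ⊑-upward-closed subsets of X with operations ∩, ∪, ⇒_X, ⊤ = X, ⊥ = ∅, •_X, ⊸_X, ▷_X, ▷→_X, ▷-_X, and unit E, is a DIBI algebra. -/
section ComplexOps

variable {X : Type*} (le : X → X → Prop) (oplus odot : X → X → Set X)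

/-- Sets that are upward-closed with respect to the preorder. -/
def UpClosed (A : Set X) : Prop := ∀ a b, a ∈ A → le a b → b ∈ A

/-- Heyting implication of the complex algebra. -/
def cHimp (A B : Set X) : Set X := {a | ∀ b, le a b → b ∈ A → b ∈ B}

/-- The operation `•` of the complex algebra. -/
def cSep (A B : Set X) : Set X :=
  {x | ∃ x' a b, le x' x ∧ x' ∈ oplus a b ∧ a ∈ A ∧ b ∈ B}

/-- The operation `⊸` of the complex algebra. -/
def cWand (A B : Set X) : Set X :=
  {x | ∀ a b, b ∈ oplus x a → a ∈ A → b ∈ B}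

/-- The operation `▷` of the complex algebra. -/
def cTri (A B : Set X) : Set X :=
  {x | ∃ a b, x ∈ odot a b ∧ a ∈ A ∧ b ∈ B}

/-- The operation `▷→` of the complex algebra. -/
def cTriimpR (A B : Set X) : Set X :=
  {x | ∀ x' a b, le x x' → b ∈ odot x' a → a ∈ A → b ∈ B}

/-- The operation `▷-` of the complex algebra. -/
def cTriimpL (A B : Set X) : Set X :=
  {x | ∀ x' a b, le x x' → b ∈ odot a x' → a ∈ A → b ∈ B}

end ComplexOps
/-- `IsDIBIAlgOn carrier le ...` says that the given operations restricted to
`carrier` constitute a DIBI algebra: a Heyting algebra together with a commutative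
monoid `sep` with unit `unit`, a weak monoid `tri`, the residuals `wand`,
`triimpR`, `triimpL`, and the reverse-exchange law. -/
structure IsDIBIAlgOn {α : Type*} (carrier : Set α) (le : α → α → Prop)
    (inf sup himp sep wand tri triimpR triimpL : α → α → α)
    (top bot unit : α) : Prop where
  -- the operations do not leave the carrier
  top_mem : top ∈ carrier
  bot_mem : bot ∈ carrier
  unit_mem : unit ∈ carrier
  inf_mem : ∀ a ∈ carrier, ∀ b ∈ carrier, inf a b ∈ carrier
  sup_mem : ∀ a ∈ carrier, ∀ b ∈ carrier, sup a b ∈ carrier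
  himp_mem : ∀ a ∈ carrier, ∀ b ∈ carrier, himp a b ∈ carrier
  sep_mem : ∀ a ∈ carrier, ∀ b ∈ carrier, sep a b ∈ carrier
  wand_mem : ∀ a ∈ carrier, ∀ b ∈ carrier, wand a b ∈ carrier
  tri_mem : ∀ a ∈ carrier, ∀ b ∈ carrier, tri a b ∈ carrier
  triimpR_mem : ∀ a ∈ carrier, ∀ b ∈ carrier, triimpR a b ∈ carrier
  triimpL_mem : ∀ a ∈ carrier, ∀ b ∈ carrier, triimpL a b ∈ carrier
  -- partial order
  le_refl : ∀ a ∈ carrier, le a a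
  le_trans : ∀ a ∈ carrier, ∀ b ∈ carrier, ∀ c ∈ carrier, le a b → le b c → le a c
  le_antisymm : ∀ a ∈ carrier, ∀ b ∈ carrier, le a b → le b a → a = b
  -- bounded lattice
  inf_le_left : ∀ a ∈ carrier, ∀ b ∈ carrier, le (inf a b) a
  inf_le_right : ∀ a ∈ carrier, ∀ b ∈ carrier, le (inf a b) b
  le_inf : ∀ a ∈ carrier, ∀ b ∈ carrier, ∀ c ∈ carrier, le a b → le a c → le a (inf b c)
  le_sup_left : ∀ a ∈ carrier, ∀ b ∈ carrier, le a (sup a b)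
  le_sup_right : ∀ a ∈ carrier, ∀ b ∈ carrier, le b (sup a b)
  sup_le : ∀ a ∈ carrier, ∀ b ∈ carrier, ∀ c ∈ carrier, le a c → le b c → le (sup a b) c
  le_top : ∀ a ∈ carrier, le a top
  bot_le : ∀ a ∈ carrier, le bot a
  -- Heyting implication
  himp_adj : ∀ a ∈ carrier, ∀ b ∈ carrier, ∀ c ∈ carrier,
    (le (inf a b) c ↔ le a (himp b c))
  -- (sep, unit) commutative monoid
  sep_comm : ∀ a ∈ carrier, ∀ b ∈ carrier, sep a b = sep b a
  sep_assoc : ∀ a ∈ carrier, ∀ b ∈ carrier, ∀ c ∈ carrier,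
    sep (sep a b) c = sep a (sep b c)
  sep_unit : ∀ a ∈ carrier, sep a unit = a
  -- (tri, unit) weak monoid
  tri_assoc : ∀ a ∈ carrier, ∀ b ∈ carrier, ∀ c ∈ carrier,
    tri (tri a b) c = tri a (tri b c)
  tri_unit_right : ∀ a ∈ carrier, tri a unit = a
  tri_unit_left : ∀ a ∈ carrier, le a (tri unit a)
  -- residuation
  wand_adj : ∀ a ∈ carrier, ∀ b ∈ carrier, ∀ c ∈ carrier,
    (le (sep a b) c ↔ le a (wand b c))
  triimpR_adj : ∀ a ∈ carrier, ∀ b ∈ carrier, ∀ c ∈ carrier,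
    (le (tri a b) c ↔ le a (triimpR b c))
  triimpL_adj : ∀ a ∈ carrier, ∀ b ∈ carrier, ∀ c ∈ carrier,
    (le (tri a b) c ↔ le b (triimpL a c))
  -- reverse exchange
  rev_exchange : ∀ a ∈ carrier, ∀ b ∈ carrier, ∀ c ∈ carrier, ∀ d ∈ carrier,
    le (sep (tri a b) (tri c d)) (tri (sep a c) (sep b d))

/-! Each law of the complex algebra is the frame condition of the same name read pointwise.
The preorder enters through the up-closure built into `•_X` and the quantification over
`x' ⊒ x` in `▷→_X` and `▷-_X`; `⊕ Down-Closed` and `⊙ Up-Closed` are what keep `⊸_X` and `▷_X`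
upward closed, let `•_X` be re-associated across its up-closure, and carry Reverse Exchange
from `x' ⊑ x` up to `x`. -/

section ComplexAlgebra

variable {X : Type*} {le : X → X → Prop} {oplus odot : X → X → Set X} {E A B C : Set X}

theorem upClosed_univ : UpClosed le (Set.univ : Set X) := fun _ _ _ _ => trivial

theorem upClosed_empty : UpClosed le (∅ : Set X) := fun _ _ h _ => h

theorem UpClosed.inter (hA : UpClosed le A) (hB : UpClosed le B) : UpClosed le (A ∩ B) :=
  fun a b ha hab => ⟨hA a b ha.1 hab, hB a b ha.2 hab⟩

theorem UpClosed.union (hA : UpClosed le A) (hB : UpClosed le B) : UpClosed le (A ∪ B) :=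
  fun a b ha hab => ha.imp (hA a b · hab) (hB a b · hab)

theorem upClosed_cHimp [IsTrans X le] : UpClosed le (cHimp le A B) :=
  fun _ _ ha hab c hbc hcA => ha c (trans_of le hab hbc) hcA

theorem upClosed_cSep [IsTrans X le] : UpClosed le (cSep le oplus A B) := by
  rintro x y ⟨x', a, b, hx'x, hx', ha, hb⟩ hxy
  exact ⟨x', a, b, trans_of le hx'x hxy, hx', ha, hb⟩

theorem UpClosed.cWand [Std.Refl le]
    (hdown : ∀ x y z x' y', z ∈ oplus x y → le x' x → le y' y → ∃ z', le z' z ∧ z' ∈ oplus x' y')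
    (hB : UpClosed le B) : UpClosed le (cWand oplus A B) := by
  intro x y hx hxy a b hb ha
  obtain ⟨b', hb'b, hb'⟩ := hdown y a b x a hb hxy (refl_of le a)
  exact hB _ _ (hx a b' hb' ha) hb'b

theorem UpClosed.cTri
    (hup : ∀ x y z z', z ∈ odot x y → le z z' → ∃ x' y', le x x' ∧ le y y' ∧ z' ∈ odot x' y')
    (hA : UpClosed le A) (hB : UpClosed le B) : UpClosed le (cTri odot A B) := by
  rintro x y ⟨a, b, hx, ha, hb⟩ hxy
  obtain ⟨a', b', haa', hbb', hy⟩ := hup a b x y hx hxy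
  exact ⟨a', b', hy, hA _ _ ha haa', hB _ _ hb hbb'⟩

theorem upClosed_cTriimpR [IsTrans X le] : UpClosed le (cTriimpR le odot A B) :=
  fun _ _ hx hxy x' a b hyx' => hx x' a b (trans_of le hxy hyx')

theorem upClosed_cTriimpL [IsTrans X le] : UpClosed le (cTriimpL le odot A B) :=
  fun _ _ hx hxy x' a b hyx' => hx x' a b (trans_of le hxy hyx')

theorem inter_subset_iff_subset_cHimp [Std.Refl le] (hA : UpClosed le A) :
    A ∩ B ⊆ C ↔ A ⊆ cHimp le B C :=
  ⟨fun h a ha b hab hb => h ⟨hA a b ha hab, hb⟩,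
    fun h x hx => h hx.1 x (refl_of le x) hx.2⟩

theorem cSep_subset_iff_subset_cWand [Std.Refl le] (hC : UpClosed le C) :
    cSep le oplus A B ⊆ C ↔ A ⊆ cWand oplus B C := by
  constructor
  · intro h a ha b x hx hb
    exact h ⟨x, a, b, refl_of le x, hx, ha, hb⟩
  · rintro h x ⟨x', a, b, hx'x, hx', ha, hb⟩
    exact hC _ _ (h ha b x' hx' hb) hx'x

theorem cTri_subset_iff_subset_cTriimpR [Std.Refl le] (hA : UpClosed le A) :
    cTri odot A B ⊆ C ↔ A ⊆ cTriimpR le odot B C := by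
  constructor
  · intro h a ha x' b y hax' hy hb
    exact h ⟨x', b, hy, hA a x' ha hax', hb⟩
  · rintro h x ⟨a, b, hx, ha, hb⟩
    exact h ha a b x (refl_of le a) hx hb

theorem cTri_subset_iff_subset_cTriimpL [Std.Refl le] (hB : UpClosed le B) :
    cTri odot A B ⊆ C ↔ B ⊆ cTriimpL le odot A C := by
  constructor
  · intro h b hb x' a y hbx' hy ha
    exact h ⟨a, x', hy, ha, hB b x' hb hbx'⟩
  · rintro h x ⟨a, b, hx, ha, hb⟩
    exact h hb b a x (refl_of le b) hx ha

theorem cSep_comm (hcomm : ∀ x y z, z ∈ oplus x y → z ∈ oplus y x) (A B : Set X) :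
    cSep le oplus A B = cSep le oplus B A := by
  have key : ∀ A B : Set X, cSep le oplus A B ⊆ cSep le oplus B A :=
    fun _ _ _ ⟨x', a, b, hx'x, hx', ha, hb⟩ => ⟨x', b, a, hx'x, hcomm _ _ _ hx', hb, ha⟩
  exact (key A B).antisymm (key B A)

theorem cSep_assoc_subset [Std.Refl le] [IsTrans X le]
    (hdown : ∀ x y z x' y', z ∈ oplus x y → le x' x → le y' y → ∃ z', le z' z ∧ z' ∈ oplus x' y')
    (hassoc : ∀ x y z t w, w ∈ oplus t z → t ∈ oplus x y → ∃ s, s ∈ oplus y z ∧ w ∈ oplus x s)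
    (A B C : Set X) :
    cSep le oplus (cSep le oplus A B) C ⊆ cSep le oplus A (cSep le oplus B C) := by
  rintro x ⟨x', t, c, hx'x, hx', ⟨t', a, b, ht't, ht', ha, hb⟩, hc⟩
  obtain ⟨z, hzx', hz⟩ := hdown t c x' t' c hx' ht't (refl_of le c)
  obtain ⟨s, hs, hzs⟩ := hassoc a b c t' z hz ht'
  exact ⟨z, a, s, trans_of le hzx' hx'x, hzs, ha, s, b, c, refl_of le s, hs, hb, hc⟩

theorem cSep_assoc [Std.Refl le] [IsTrans X le]
    (hdown : ∀ x y z x' y', z ∈ oplus x y → le x' x → le y' y → ∃ z', le z' z ∧ z' ∈ oplus x' y')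
    (hcomm : ∀ x y z, z ∈ oplus x y → z ∈ oplus y x)
    (hassoc : ∀ x y z t w, w ∈ oplus t z → t ∈ oplus x y → ∃ s, s ∈ oplus y z ∧ w ∈ oplus x s)
    (A B C : Set X) :
    cSep le oplus (cSep le oplus A B) C = cSep le oplus A (cSep le oplus B C) := by
  refine (cSep_assoc_subset hdown hassoc A B C).antisymm ?_
  calc cSep le oplus A (cSep le oplus B C)
      = cSep le oplus (cSep le oplus C B) A := by rw [cSep_comm hcomm, cSep_comm hcomm B C]
    _ ⊆ cSep le oplus C (cSep le oplus B A) := cSep_assoc_subset hdown hassoc C B A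
    _ = cSep le oplus (cSep le oplus A B) C := by rw [cSep_comm hcomm, cSep_comm hcomm B A]

theorem cSep_unit [Std.Refl le] (hcomm : ∀ x y z, z ∈ oplus x y → z ∈ oplus y x)
    (hunit : ∀ x, ∃ e ∈ E, x ∈ oplus e x) (hcoh : ∀ e x y, e ∈ E → x ∈ oplus y e → le y x)
    (hA : UpClosed le A) : cSep le oplus A E = A := by
  refine Set.Subset.antisymm ?_ fun a ha => ?_
  · rintro x ⟨x', a, e, hx'x, hx', ha, he⟩
    exact hA x' x (hA a x' ha (hcoh e x' a he hx')) hx'x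
  · obtain ⟨e, he, hae⟩ := hunit a
    exact ⟨a, a, e, refl_of le a, hcomm _ _ _ hae, ha, he⟩

theorem cTri_assoc
    (hassoc : ∀ x y z w, (∃ t, w ∈ odot t z ∧ t ∈ odot x y) ↔ (∃ s, s ∈ odot y z ∧ w ∈ odot x s))
    (A B C : Set X) : cTri odot (cTri odot A B) C = cTri odot A (cTri odot B C) := by
  ext x
  constructor
  · rintro ⟨t, c, hx, ⟨a, b, ht, ha, hb⟩, hc⟩
    obtain ⟨s, hs, hxs⟩ := (hassoc a b c x).mp ⟨t, hx, ht⟩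
    exact ⟨a, s, hxs, ha, b, c, hs, hb, hc⟩
  · rintro ⟨a, s, hx, ha, b, c, hs, hb, hc⟩
    obtain ⟨t, hxt, ht⟩ := (hassoc a b c x).mpr ⟨s, hs, hx⟩
    exact ⟨t, c, hxt, ⟨a, b, ht, ha, hb⟩, hc⟩

theorem cTri_unit_right (hunit : ∀ x, ∃ e ∈ E, x ∈ odot x e)
    (hcoh : ∀ e x y, e ∈ E → x ∈ odot y e → le y x) (hA : UpClosed le A) :
    cTri odot A E = A := by
  refine Set.Subset.antisymm ?_ fun a ha => ?_
  · rintro x ⟨a, e, hx, ha, he⟩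
    exact hA a x ha (hcoh e x a he hx)
  · obtain ⟨e, he, hae⟩ := hunit a
    exact ⟨a, e, hae, ha, he⟩

theorem subset_cTri_unit_left (hunit : ∀ x, ∃ e ∈ E, x ∈ odot e x) (A : Set X) :
    A ⊆ cTri odot E A := fun a ha =>
  let ⟨e, he, hae⟩ := hunit a
  ⟨e, a, hae, he, ha⟩

theorem cSep_cTri_subset_cTri_cSep
    (hup : ∀ x y z z', z ∈ odot x y → le z z' → ∃ x' y', le x x' ∧ le y y' ∧ z' ∈ odot x' y')
    (hexch : ∀ x y z y1 y2 z1 z2, x ∈ oplus y z → y ∈ odot y1 y2 → z ∈ odot z1 z2 →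
      ∃ u v, u ∈ oplus y1 z1 ∧ v ∈ oplus y2 z2 ∧ x ∈ odot u v)
    (A B C D : Set X) :
    cSep le oplus (cTri odot A B) (cTri odot C D) ⊆
      cTri odot (cSep le oplus A C) (cSep le oplus B D) := by
  rintro x ⟨x', y, z, hx'x, hx', ⟨y1, y2, hy, hy1, hy2⟩, z1, z2, hz, hz1, hz2⟩
  obtain ⟨u, v, hu, hv, hx'uv⟩ := hexch x' y z y1 y2 z1 z2 hx' hy hz
  obtain ⟨u', v', huu', hvv', hxuv⟩ := hup u v x' x hx'uv hx'x
  exact ⟨u', v', hxuv, ⟨u, y1, z1, huu', hu, hy1, hz1⟩, v, y2, z2, hvv', hv, hy2, hz2⟩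

end ComplexAlgebra

/-- **The complex algebra of a DIBI frame is a DIBI algebra.** For every DIBI frame
`(X, ⊑, ⊕, ⊙, E)`, the set of `⊑`-upward-closed subsets of `X`, with operations
`∩`, `∪`, `⇒_X`, top `X`, bottom `∅`, `•_X`, `⊸_X`, `▷_X`, `▷→_X`, `▷-_X` and
unit `E`, is a DIBI algebra. -/
theorem complexAlgebra_isDIBIAlg {X : Type*} (le : X → X → Prop)
    (oplus odot : X → X → Set X) (E : Set X)
    (hFrame : IsDIBIFrame le oplus odot E) :
    IsDIBIAlgOn {A : Set X | UpClosed le A} (· ⊆ ·)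
      (· ∩ ·) (· ∪ ·) (cHimp le) (cSep le oplus) (cWand oplus)
      (cTri odot) (cTriimpR le odot) (cTriimpL le odot)
      Set.univ ∅ E := by
  have : Std.Refl le := ⟨hFrame.le_refl⟩
  have : IsTrans X le := ⟨hFrame.le_trans⟩
  exact
  { top_mem := upClosed_univ
    bot_mem := upClosed_empty
    unit_mem := hFrame.unit_closure
    inf_mem := fun _ hA _ hB => hA.inter hB
    sup_mem := fun _ hA _ hB => hA.union hB
    himp_mem := fun _ _ _ _ => upClosed_cHimp
    sep_mem := fun _ _ _ _ => upClosed_cSep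
    wand_mem := fun _ _ _ hB => hB.cWand hFrame.oplus_down
    tri_mem := fun _ hA _ hB => hA.cTri hFrame.odot_up hB
    triimpR_mem := fun _ _ _ _ => upClosed_cTriimpR
    triimpL_mem := fun _ _ _ _ => upClosed_cTriimpL
    le_refl := fun _ _ => subset_rfl
    le_trans := fun _ _ _ _ _ _ => Set.Subset.trans
    le_antisymm := fun _ _ _ _ => Set.Subset.antisymm
    inf_le_left := fun _ _ _ _ => Set.inter_subset_left
    inf_le_right := fun _ _ _ _ => Set.inter_subset_right
    le_inf := fun _ _ _ _ _ _ => Set.subset_inter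
    le_sup_left := fun _ _ _ _ => Set.subset_union_left
    le_sup_right := fun _ _ _ _ => Set.subset_union_right
    sup_le := fun _ _ _ _ _ _ => Set.union_subset
    le_top := fun A _ => Set.subset_univ A
    bot_le := fun A _ => Set.empty_subset A
    himp_adj := fun _ hA _ _ _ _ => inter_subset_iff_subset_cHimp hA
    sep_comm := fun A _ B _ => cSep_comm hFrame.oplus_comm A B
    sep_assoc := fun A _ B _ C _ =>
      cSep_assoc hFrame.oplus_down hFrame.oplus_comm hFrame.oplus_assoc A B C
    sep_unit := fun _ hA =>
      cSep_unit hFrame.oplus_comm hFrame.oplus_unit_exists hFrame.oplus_unit_coherence hA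
    tri_assoc := fun A _ B _ C _ => cTri_assoc hFrame.odot_assoc A B C
    tri_unit_right := fun _ hA =>
      cTri_unit_right hFrame.odot_unit_exists_right hFrame.odot_coherence_right hA
    tri_unit_left := fun A _ => subset_cTri_unit_left hFrame.odot_unit_exists_left A
    wand_adj := fun _ _ _ _ _ hC => cSep_subset_iff_subset_cWand hC
    triimpR_adj := fun _ hA _ _ _ _ => cTri_subset_iff_subset_cTriimpR hA
    triimpL_adj := fun _ _ _ hB _ _ => cTri_subset_iff_subset_cTriimpL hB
    rev_exchange := fun A _ B _ C _ D _ =>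
      cSep_cTri_subset_cTri_cSep hFrame.odot_up hFrame.rev_exchange A B C D }
end

section
/- Representation theorem for DIBI algebras: every DIBI algebra A embeds into the complex algebra of its prime filter frame; explicitly, the map θ_A : A → Com(Pr(A)) defined by θ_A(a) = {F ∈ PF_A : a ∈ F} is an injective homomorphism of DIBI algebras. -/
/-!
The map `θ` is a lattice embedding by the prime filter theorem. Each of `⊓`, `∗`, `▷` is
residuated in both arguments, so `op · t` preserves `⊥` and finite joins. Hence, for a prime
filter `H` and a filter `T`, the elements `x` with `op x t ∉ H` for some `t ∈ T` form an ideal,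
and the prime filter theorem enlarges any filter `G₀` with `op G₀ T ⊆ H` to a prime filter with
the same property. Applied once in each argument, this produces the prime filters `G, H`
witnessing `a ∗ b ∈ F` or `a ▷ b ∈ F` in the frame. For a residual `r a b ∉ F`, one first
separates the filter generated by `op F a` from `b` by a prime filter `H`, and then enlarges the
principal filter of `a` in the same way.
-/

/-- A DIBI algebra: a Heyting algebra equipped with a commutative monoid `sep`
with unit `unit`, a weak monoid `tri`, residuals `wand`, `triimpR`, `triimpL`,
and the reverse-exchange law. -/
structure DIBIAlg where
  carrier : Type
  le : carrier → carrier → Prop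
  inf : carrier → carrier → carrier
  sup : carrier → carrier → carrier
  himp : carrier → carrier → carrier
  top : carrier
  bot : carrier
  sep : carrier → carrier → carrier
  wand : carrier → carrier → carrier
  tri : carrier → carrier → carrier
  triimpR : carrier → carrier → carrier
  triimpL : carrier → carrier → carrier
  unit : carrier
  -- partial order
  le_refl : ∀ a, le a a
  le_trans : ∀ a b c, le a b → le b c → le a c
  le_antisymm : ∀ a b, le a b → le b a → a = b
  -- bounded lattice
  inf_le_left : ∀ a b, le (inf a b) a
  inf_le_right : ∀ a b, le (inf a b) b
  le_inf : ∀ a b c, le a b → le a c → le a (inf b c)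
  le_sup_left : ∀ a b, le a (sup a b)
  le_sup_right : ∀ a b, le b (sup a b)
  sup_le : ∀ a b c, le a c → le b c → le (sup a b) c
  le_top : ∀ a, le a top
  bot_le : ∀ a, le bot a
  -- Heyting implication
  himp_adj : ∀ a b c, le (inf a b) c ↔ le a (himp b c)
  -- (sep, unit) commutative monoid
  sep_comm : ∀ a b, sep a b = sep b a
  sep_assoc : ∀ a b c, sep (sep a b) c = sep a (sep b c)
  sep_unit : ∀ a, sep a unit = a
  -- (tri, unit) weak monoid
  tri_assoc : ∀ a b c, tri (tri a b) c = tri a (tri b c)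
  tri_unit_right : ∀ a, tri a unit = a
  tri_unit_left : ∀ a, le a (tri unit a)
  -- residuation
  wand_adj : ∀ a b c, le (sep a b) c ↔ le a (wand b c)
  triimpR_adj : ∀ a b c, le (tri a b) c ↔ le a (triimpR b c)
  triimpL_adj : ∀ a b c, le (tri a b) c ↔ le b (triimpL a c)
  -- reverse exchange
  rev_exchange : ∀ a b c d, le (sep (tri a b) (tri c d)) (tri (sep a c) (sep b d))
/-- A prime filter on (the underlying bounded distributive lattice of) a DIBI
algebra: a nonempty, upward-closed, meet-closed subset that is proper and prime. -/
def IsPrimeFilter (A : DIBIAlg) (F : Set A.carrier) : Prop :=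
  F.Nonempty ∧
  (∀ x y, x ∈ F → A.le x y → y ∈ F) ∧
  (∀ x y, x ∈ F → y ∈ F → A.inf x y ∈ F) ∧
  A.bot ∉ F ∧
  (∀ x y, A.sup x y ∈ F → x ∈ F ∨ y ∈ F)

/-- The set of prime filters of a DIBI algebra. -/
def PF (A : DIBIAlg) : Type := {F : Set A.carrier // IsPrimeFilter A F}

/-- `F ⊕_A G` in the prime filter frame. -/
def pfOplus (A : DIBIAlg) (F G : PF A) : Set (PF A) :=
  {H | ∀ a ∈ F.1, ∀ b ∈ G.1, A.sep a b ∈ H.1}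

/-- `F ⊙_A G` in the prime filter frame. -/
def pfOdot (A : DIBIAlg) (F G : PF A) : Set (PF A) :=
  {H | ∀ a ∈ F.1, ∀ b ∈ G.1, A.tri a b ∈ H.1}

/-- The units of the prime filter frame: prime filters containing `I`. -/
def pfE (A : DIBIAlg) : Set (PF A) := {F | A.unit ∈ F.1}
/-- The inclusion order on prime filters. -/
def pfLe (A : DIBIAlg) (F G : PF A) : Prop := F.1 ⊆ G.1

/-- The map `θ_A` sending an element to the set of prime filters containing it. -/
def theta (A : DIBIAlg) (a : A.carrier) : Set (PF A) := {F | a ∈ F.1}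

namespace Order.PFilter

variable {P Q : Type*} [Preorder P] [Preorder Q]

def map (f : P → Q) (hf : Monotone f) (F : PFilter P) : PFilter Q :=
  IsPFilter.toPFilter (F := {y | ∃ x ∈ F, f x ≤ y}) <| .of_def
    (let ⟨x, hx⟩ := F.nonempty; ⟨f x, x, hx, le_rfl⟩)
    (fun _ ⟨x₁, hx₁, h₁⟩ _ ⟨x₂, hx₂, h₂⟩ =>
      let ⟨x, hx, hx₁x, hx₂x⟩ := F.directed x₁ hx₁ x₂ hx₂
      ⟨f x, ⟨x, hx, le_rfl⟩, (hf hx₁x).trans h₁, (hf hx₂x).trans h₂⟩)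
    fun hyz ⟨x, hx, hxy⟩ => ⟨x, hx, hxy.trans hyz⟩

end Order.PFilter

open Order

namespace DIBIAlg

variable (A : DIBIAlg)

instance : HeytingAlgebra A.carrier where
  le := A.le
  le_refl := A.le_refl
  le_trans := A.le_trans
  le_antisymm := A.le_antisymm
  inf := A.inf
  inf_le_left := A.inf_le_left
  inf_le_right := A.inf_le_right
  le_inf := A.le_inf
  sup := A.sup
  le_sup_left := A.le_sup_left
  le_sup_right := A.le_sup_right
  sup_le := A.sup_le
  top := A.top
  le_top := A.le_top
  bot := A.bot
  bot_le := A.bot_le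
  himp := A.himp
  le_himp_iff a b c := (A.himp_adj a b c).symm
  compl a := A.himp a A.bot
  himp_bot _ := rfl

variable {A}

theorem gc_sep_left (b : A.carrier) : GaloisConnection (A.sep · b) (A.wand b) :=
  fun a c => A.wand_adj a b c

theorem gc_sep_right (a : A.carrier) : GaloisConnection (A.sep a ·) (A.wand a) :=
  fun b c => by
    show A.sep a b ≤ c ↔ _
    rw [A.sep_comm]
    exact A.wand_adj b a c

theorem gc_tri_left (b : A.carrier) : GaloisConnection (A.tri · b) (A.triimpR b) :=
  fun a c => A.triimpR_adj a b c

theorem gc_tri_right (a : A.carrier) : GaloisConnection (A.tri a ·) (A.triimpL a) :=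
  fun b c => A.triimpL_adj a b c

end DIBIAlg

open DIBIAlg (gc_sep_left gc_sep_right gc_tri_left gc_tri_right)

namespace IsPrimeFilter

variable {A : DIBIAlg} {F : Set A.carrier} {a b : A.carrier}

theorem mem_of_le (hF : IsPrimeFilter A F) (hab : a ≤ b) (ha : a ∈ F) : b ∈ F :=
  hF.2.1 a b ha hab

theorem inf_mem_iff (hF : IsPrimeFilter A F) : a ⊓ b ∈ F ↔ a ∈ F ∧ b ∈ F :=
  ⟨fun h => ⟨hF.mem_of_le inf_le_left h, hF.mem_of_le inf_le_right h⟩,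
    fun h => hF.2.2.1 a b h.1 h.2⟩

theorem sup_mem_iff (hF : IsPrimeFilter A F) : a ⊔ b ∈ F ↔ a ∈ F ∨ b ∈ F :=
  ⟨hF.2.2.2.2 a b, fun h => h.elim (hF.mem_of_le le_sup_left) (hF.mem_of_le le_sup_right)⟩

theorem bot_notMem (hF : IsPrimeFilter A F) : (⊥ : A.carrier) ∉ F :=
  hF.2.2.2.1

theorem top_mem (hF : IsPrimeFilter A F) : (⊤ : A.carrier) ∈ F :=
  let ⟨_, hx⟩ := hF.1
  hF.mem_of_le le_top hx

def toPFilter (hF : IsPrimeFilter A F) : PFilter A.carrier :=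
  IsPFilter.toPFilter <| .of_def hF.1
    (fun x hx y hy => ⟨x ⊓ y, hF.inf_mem_iff.2 ⟨hx, hy⟩, inf_le_left, inf_le_right⟩)
    hF.mem_of_le

end IsPrimeFilter

variable {A : DIBIAlg}

theorem isPrimeFilter_compl {J : Ideal A.carrier} (hJ : J.IsPrime) :
    IsPrimeFilter A (J : Set A.carrier)ᶜ :=
  ⟨⟨⊤, hJ.top_notMem⟩, fun _ _ hx hxy hy => hx (J.lower hxy hy),
    fun _ _ hx hy hxy => (hJ.mem_or_mem hxy).elim hx hy, fun h => h J.bot_mem,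
    fun _ _ hxy => not_and_or.1 fun h => hxy (Ideal.sup_mem h.1 h.2)⟩

theorem exists_isPrimeFilter_superset_disjoint {F : PFilter A.carrier} {I : Ideal A.carrier}
    (h : Disjoint (F : Set A.carrier) I) :
    ∃ G, IsPrimeFilter A G ∧ (F : Set A.carrier) ⊆ G ∧ Disjoint G (I : Set A.carrier) :=
  let ⟨_, hJ, hIJ, hFJ⟩ := DistribLattice.prime_ideal_of_disjoint_filter_ideal h
  ⟨_, isPrimeFilter_compl hJ, hFJ.subset_compl_right, disjoint_compl_left.mono_right hIJ⟩

theorem exists_isPrimeFilter_superset_notMem {F : PFilter A.carrier} {b : A.carrier}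
    (h : ∀ x ∈ F, ¬x ≤ b) : ∃ G, IsPrimeFilter A G ∧ (F : Set A.carrier) ⊆ G ∧ b ∉ G :=
  let ⟨G, hG, hFG, hGb⟩ := exists_isPrimeFilter_superset_disjoint (I := Ideal.principal b)
    (Set.disjoint_left.2 h)
  ⟨G, hG, hFG, fun hb => Set.disjoint_left.1 hGb hb (Ideal.mem_principal.2 le_rfl)⟩

section Residuated

variable {op r : A.carrier → A.carrier → A.carrier} (gc : ∀ t, GaloisConnection (op · t) (r t))
include gc

theorem isIdeal_setOf_exists_op_notMem (mono : ∀ x, Monotone (op x)) {H : Set A.carrier}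
    (hH : IsPrimeFilter A H) (T : PFilter A.carrier) : IsIdeal {x | ∃ t ∈ T, op x t ∉ H} := by
  refine ⟨fun x y hyx ⟨t, ht, hx⟩ =>
      ⟨t, ht, fun hy => hx (hH.mem_of_le ((gc t).monotone_l hyx) hy)⟩, ?_,
    fun x ⟨t₁, ht₁, hx⟩ y ⟨t₂, ht₂, hy⟩ => ⟨x ⊔ y, ?_, le_sup_left, le_sup_right⟩⟩
  · obtain ⟨t, ht⟩ := T.nonempty
    refine ⟨⊥, t, ht, ?_⟩
    rw [(gc t).l_bot]
    exact hH.bot_notMem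
  · refine ⟨t₁ ⊓ t₂, PFilter.inf_mem ht₁ ht₂, ?_⟩
    rw [(gc _).l_sup, hH.sup_mem_iff]
    exact not_or.2 ⟨fun h => hx (hH.mem_of_le (mono x inf_le_left) h),
      fun h => hy (hH.mem_of_le (mono y inf_le_right) h)⟩

theorem exists_isPrimeFilter_superset_forall_op_mem (mono : ∀ x, Monotone (op x))
    {H : Set A.carrier} (hH : IsPrimeFilter A H) (G₀ T : PFilter A.carrier)
    (h : ∀ x ∈ G₀, ∀ t ∈ T, op x t ∈ H) :
    ∃ G, IsPrimeFilter A G ∧ (G₀ : Set A.carrier) ⊆ G ∧ ∀ x ∈ G, ∀ t ∈ T, op x t ∈ H := by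
  obtain ⟨G, hG, hG₀G, hGI⟩ := exists_isPrimeFilter_superset_disjoint
    (I := (isIdeal_setOf_exists_op_notMem gc mono hH T).toIdeal)
    (Set.disjoint_left.2 fun x hx ⟨t, ht, hxt⟩ => hxt (h x hx t ht))
  refine ⟨G, hG, hG₀G, fun x hx t ht => ?_⟩
  by_contra hxt
  exact Set.disjoint_left.1 hGI hx ⟨t, ht, hxt⟩

theorem exists_isPrimeFilter_op_mem_of_residual_notMem {F : Set A.carrier}
    (hF : IsPrimeFilter A F) {a b : A.carrier} (hab : r a b ∉ F) :
    ∃ H, IsPrimeFilter A H ∧ b ∉ H ∧ ∀ x ∈ F, op x a ∈ H := by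
  obtain ⟨H, hH, hFH, hb⟩ := exists_isPrimeFilter_superset_notMem
    (F := hF.toPFilter.map (op · a) (gc a).monotone_l)
    fun _ ⟨x, hx, hxy⟩ hyb => hab (hF.mem_of_le ((gc a).le_iff_le.1 (hxy.trans hyb)) hx)
  exact ⟨H, hH, hb, fun x hx => hFH ⟨x, hx, le_rfl⟩⟩

end Residuated

section Biresiduated

variable {op rl rr : A.carrier → A.carrier → A.carrier}
  (gcl : ∀ t, GaloisConnection (op · t) (rl t)) (gcr : ∀ x, GaloisConnection (op x ·) (rr x))
include gcl gcr

theorem exists_pf_of_op_mem {F : Set A.carrier} (hF : IsPrimeFilter A F) {a b : A.carrier}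
    (h : op a b ∈ F) :
    ∃ G H : PF A, (∀ x ∈ G.1, ∀ y ∈ H.1, op x y ∈ F) ∧ a ∈ G.1 ∧ b ∈ H.1 := by
  obtain ⟨G, hG, haG, hGb⟩ := exists_isPrimeFilter_superset_forall_op_mem gcl
    (fun x => (gcr x).monotone_l) hF (PFilter.principal a) (PFilter.principal b)
    fun x hax y hby => hF.mem_of_le (((gcl b).monotone_l hax).trans ((gcr x).monotone_l hby)) h
  obtain ⟨H, hH, hbH, hGH⟩ := exists_isPrimeFilter_superset_forall_op_mem
    (op := fun y x => op x y) gcr (fun y => (gcl y).monotone_l) hF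
    (PFilter.principal b) hG.toPFilter fun y hby x hx => hGb x hx y hby
  exact ⟨⟨G, hG⟩, ⟨H, hH⟩, fun x hx y hy => hGH y hy x hx,
    haG (PFilter.mem_principal.2 le_rfl), hbH (PFilter.mem_principal.2 le_rfl)⟩

theorem residual_mem_iff {F : Set A.carrier} (hF : IsPrimeFilter A F) {a b : A.carrier} :
    rl a b ∈ F ↔ ∀ G H : PF A, (∀ x ∈ F, ∀ y ∈ G.1, op x y ∈ H.1) → a ∈ G.1 → b ∈ H.1 := by
  refine ⟨fun h G H hFGH ha => H.2.mem_of_le ((gcl a).l_u_le b) (hFGH _ h _ ha), fun h => ?_⟩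
  by_contra hab
  obtain ⟨H, hH, hbH, hFH⟩ := exists_isPrimeFilter_op_mem_of_residual_notMem gcl hF hab
  obtain ⟨G, hG, haG, hFG⟩ := exists_isPrimeFilter_superset_forall_op_mem
    (op := fun y x => op x y) gcr (fun y => (gcl y).monotone_l) hH
    (PFilter.principal a) hF.toPFilter
    fun y hay x hx => hH.mem_of_le ((gcr x).monotone_l hay) (hFH x hx)
  exact hbH (h ⟨G, hG⟩ ⟨H, hH⟩ (fun x hx y hy => hFG y hy x hx)
    (haG (PFilter.mem_principal.2 le_rfl)))

end Biresiduated

section ComplexAlgebra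

variable {X : Type*} {le : X → X → Prop} {odot : X → X → Set X} {B C : Set X}

theorem cTriimpR_eq_cWand (hle : ∀ x, le x x) (h : UpClosed le (cWand odot B C)) :
    cTriimpR le odot B C = cWand odot B C :=
  Set.ext fun x => ⟨fun hx a b => hx x a b (hle x), fun hx x' a b hxx' => h x x' hx hxx' a b⟩

theorem cTriimpL_eq_cWand (hle : ∀ x, le x x)
    (h : UpClosed le (cWand (fun x a => odot a x) B C)) :
    cTriimpL le odot B C = cWand (fun x a => odot a x) B C :=
  Set.ext fun x => ⟨fun hx a b => hx x a b (hle x), fun hx x' a b hxx' => h x x' hx hxx' a b⟩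

end ComplexAlgebra

theorem theta_upClosed (a : A.carrier) : UpClosed (pfLe A) (theta A a) :=
  fun _ _ haF hFG => hFG haF

theorem le_of_theta_subset {a b : A.carrier} (h : theta A a ⊆ theta A b) : a ≤ b := by
  by_contra hab
  obtain ⟨G, hG, haG, hbG⟩ := exists_isPrimeFilter_superset_notMem (F := PFilter.principal a)
    fun x hax hxb => hab (hax.trans hxb)
  exact hbG (h (show ⟨G, hG⟩ ∈ theta A a from haG (PFilter.mem_principal.2 le_rfl)))

theorem theta_injective : Function.Injective (theta A) :=
  fun _ _ h => le_antisymm (le_of_theta_subset h.le) (le_of_theta_subset h.ge)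

theorem theta_inf (a b : A.carrier) : theta A (a ⊓ b) = theta A a ∩ theta A b :=
  Set.ext fun F => F.2.inf_mem_iff

theorem theta_sup (a b : A.carrier) : theta A (a ⊔ b) = theta A a ∪ theta A b :=
  Set.ext fun F => F.2.sup_mem_iff

theorem theta_top : theta A ⊤ = Set.univ :=
  Set.eq_univ_of_forall fun F => F.2.top_mem

theorem theta_bot : theta A ⊥ = ∅ :=
  Set.eq_empty_of_forall_notMem fun F => F.2.bot_notMem

theorem theta_himp (a b : A.carrier) :
    theta A (a ⇨ b) = cHimp (pfLe A) (theta A a) (theta A b) := by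
  ext F
  refine ⟨fun h G hFG haG => G.2.mem_of_le himp_inf_le (G.2.inf_mem_iff.2 ⟨hFG h, haG⟩),
    fun h => ?_⟩
  by_contra hab
  obtain ⟨H, hH, hbH, hFH⟩ := exists_isPrimeFilter_op_mem_of_residual_notMem (op := (· ⊓ ·))
    (fun _ _ _ => le_himp_iff.symm) F.2 hab
  exact hbH (h ⟨H, hH⟩ (fun x hx => (hH.inf_mem_iff.1 (hFH x hx)).1)
    (hH.inf_mem_iff.1 (hFH ⊤ F.2.top_mem)).2)

theorem theta_sep (a b : A.carrier) :
    theta A (A.sep a b) = cSep (pfLe A) (pfOplus A) (theta A a) (theta A b) := by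
  ext F
  refine ⟨fun h => ?_, fun ⟨_, G, H, hF'F, hGH, ha, hb⟩ => hF'F (hGH a ha b hb)⟩
  obtain ⟨G, H, hGH, ha, hb⟩ := exists_pf_of_op_mem gc_sep_left gc_sep_right F.2 h
  exact ⟨F, G, H, subset_rfl, hGH, ha, hb⟩

theorem theta_tri (a b : A.carrier) :
    theta A (A.tri a b) = cTri (pfOdot A) (theta A a) (theta A b) :=
  Set.ext fun F => ⟨exists_pf_of_op_mem gc_tri_left gc_tri_right F.2,
    fun ⟨_, _, hGH, ha, hb⟩ => hGH a ha b hb⟩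

theorem theta_wand (a b : A.carrier) :
    theta A (A.wand a b) = cWand (pfOplus A) (theta A a) (theta A b) :=
  Set.ext fun F => residual_mem_iff gc_sep_left gc_sep_right F.2

theorem theta_triimpR (a b : A.carrier) :
    theta A (A.triimpR a b) = cTriimpR (pfLe A) (pfOdot A) (theta A a) (theta A b) := by
  have h : theta A (A.triimpR a b) = cWand (pfOdot A) (theta A a) (theta A b) :=
    Set.ext fun F => residual_mem_iff gc_tri_left gc_tri_right F.2
  rw [cTriimpR_eq_cWand (le := pfLe A) (fun _ => subset_rfl) (h ▸ theta_upClosed _), h]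

theorem theta_triimpL (a b : A.carrier) :
    theta A (A.triimpL a b) = cTriimpL (pfLe A) (pfOdot A) (theta A a) (theta A b) := by
  have h : theta A (A.triimpL a b) = cWand (fun F G => pfOdot A G F) (theta A a) (theta A b) :=
    Set.ext fun F =>
      (residual_mem_iff (op := fun x t => A.tri t x) gc_tri_right gc_tri_left F.2).trans <|
      forall₂_congr fun _ _ => imp_congr_left
        ⟨fun h y hy x hx => h x hx y hy, fun h x hx y hy => h y hy x hx⟩
  rw [cTriimpL_eq_cWand (le := pfLe A) (fun _ => subset_rfl) (h ▸ theta_upClosed _), h]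

/-- **Representation theorem for DIBI algebras.** Every DIBI algebra `A` embeds into
the complex algebra of its prime filter frame: the map `θ_A(a) = {F ∈ PF_A : a ∈ F}`
lands in the upward-closed subsets of `Pr(A)`, is injective, and is a homomorphism of
DIBI algebras, preserving `∧, ∨, →, ⊤, ⊥, ∗, -∗, ▷, ▷→, ▷-` and the unit `I`. -/
theorem representation_theorem (A : DIBIAlg) :
    (∀ a, UpClosed (pfLe A) (theta A a)) ∧
    Function.Injective (theta A) ∧
    (∀ a b, theta A (A.inf a b) = theta A a ∩ theta A b) ∧
    (∀ a b, theta A (A.sup a b) = theta A a ∪ theta A b) ∧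
    (∀ a b, theta A (A.himp a b) = cHimp (pfLe A) (theta A a) (theta A b)) ∧
    theta A A.top = Set.univ ∧
    theta A A.bot = ∅ ∧
    (∀ a b, theta A (A.sep a b) = cSep (pfLe A) (pfOplus A) (theta A a) (theta A b)) ∧
    (∀ a b, theta A (A.wand a b) = cWand (pfOplus A) (theta A a) (theta A b)) ∧
    (∀ a b, theta A (A.tri a b) = cTri (pfOdot A) (theta A a) (theta A b)) ∧
    (∀ a b, theta A (A.triimpR a b) = cTriimpR (pfLe A) (pfOdot A) (theta A a) (theta A b)) ∧
    (∀ a b, theta A (A.triimpL a b) = cTriimpL (pfLe A) (pfOdot A) (theta A a) (theta A b)) ∧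
    theta A A.unit = pfE A :=
  ⟨theta_upClosed, theta_injective, theta_inf, theta_sup, theta_himp, theta_top, theta_bot,
    theta_sep, theta_wand, theta_tri, theta_triimpR, theta_triimpL, rfl⟩
end

section
/- Soundness and completeness of DIBI with respect to its Kripke semantics: for all DIBI formulas P and Q, the sequent P ⊢ Q is derivable in the DIBI Hilbert system if and only if P ⊨ Q, where P ⊨ Q means that for every DIBI frame with persistent valuation, if P is satisfied at every state then Q is satisfied at every state (equivalently, every state satisfying P satisfies Q). -/
/-- The DIBI Hilbert system: derivability of sequents `P ⊢ Q`. -/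
inductive Deriv {AP : Type*} : Formula AP → Formula AP → Prop where
  -- intuitionistic rules
  | ax (P : Formula AP) : Deriv P P
  | top_right (P : Formula AP) : Deriv P .top
  | bot_left (P : Formula AP) : Deriv .bot P
  | or_left {P Q R : Formula AP} : Deriv P R → Deriv Q R → Deriv (.or P Q) R
  | or_right1 {P Q1 : Formula AP} (Q2 : Formula AP) : Deriv P Q1 → Deriv P (.or Q1 Q2)
  | or_right2 {P Q2 : Formula AP} (Q1 : Formula AP) : Deriv P Q2 → Deriv P (.or Q1 Q2)
  | and_right {P Q R : Formula AP} : Deriv P Q → Deriv P R → Deriv P (.and Q R)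
  | and_left {Q R : Formula AP} (P : Formula AP) : Deriv Q R → Deriv (.and P Q) R
  | and_elim1 {P Q1 Q2 : Formula AP} : Deriv P (.and Q1 Q2) → Deriv P Q1
  | and_elim2 {P Q1 Q2 : Formula AP} : Deriv P (.and Q1 Q2) → Deriv P Q2
  | imp_intro {P Q R : Formula AP} : Deriv (.and P Q) R → Deriv P (.imp Q R)
  | mp {P Q R : Formula AP} : Deriv P (.imp Q R) → Deriv P Q → Deriv P R
  -- adjunction and modus ponens rules for -∗, ▷→, ▷-
  | wand_intro {P Q R : Formula AP} : Deriv (.sep P Q) R → Deriv P (.wand Q R)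
  | wand_mp {P Q R S : Formula AP} : Deriv P (.wand Q R) → Deriv S Q → Deriv (.sep P S) R
  | triimpR_intro {P Q R : Formula AP} : Deriv (.tri P Q) R → Deriv P (.triimpR Q R)
  | triimpR_mp {P Q R S : Formula AP} : Deriv P (.triimpR Q R) → Deriv S Q → Deriv (.tri P S) R
  | triimpL_intro {P Q R : Formula AP} : Deriv (.tri P Q) R → Deriv Q (.triimpL P R)
  | triimpL_mp {P Q R S : Formula AP} : Deriv P (.triimpL Q R) → Deriv S Q → Deriv (.tri S P) R
  -- (∗, I) is a commutative monoid up to interderivability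
  | sep_unit1 (P : Formula AP) : Deriv P (.sep P .emp)
  | sep_unit2 (P : Formula AP) : Deriv (.sep P .emp) P
  | sep_conj {P Q R S : Formula AP} : Deriv P R → Deriv Q S → Deriv (.sep P Q) (.sep R S)
  | sep_comm (P Q : Formula AP) : Deriv (.sep P Q) (.sep Q P)
  | sep_assoc1 (P Q R : Formula AP) : Deriv (.sep (.sep P Q) R) (.sep P (.sep Q R))
  | sep_assoc2 (P Q R : Formula AP) : Deriv (.sep P (.sep Q R)) (.sep (.sep P Q) R)
  -- rules for ▷
  | tri_left_unit (P : Formula AP) : Deriv P (.tri .emp P)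
  | tri_right_unit1 (P : Formula AP) : Deriv P (.tri P .emp)
  | tri_right_unit2 (P : Formula AP) : Deriv (.tri P .emp) P
  | tri_conj {P Q R S : Formula AP} : Deriv P R → Deriv Q S → Deriv (.tri P Q) (.tri R S)
  | tri_assoc1 (P Q R : Formula AP) : Deriv (.tri (.tri P Q) R) (.tri P (.tri Q R))
  | tri_assoc2 (P Q R : Formula AP) : Deriv (.tri P (.tri Q R)) (.tri (.tri P Q) R)
  -- reverse exchange
  | rev_ex (P Q R S : Formula AP) :
      Deriv (.sep (.tri P Q) (.tri R S)) (.tri (.sep P R) (.sep Q S))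
/-! Soundness is a routine induction on derivations, using persistence of satisfaction.
Completeness goes through the canonical model whose states are the prime theories, with
`Γ ∈ Δ ⊕ Θ` iff `a ∗ b ∈ Γ` for all `a ∈ Δ`, `b ∈ Θ` (likewise `⊙` with `▷`). Every
existential frame condition and every clause of the truth lemma reduces to one
Lindenbaum-style lemma: a theory disjoint from an ideal (a set closed downward under `⊢` and
under `∨`, containing `⊥`) extends to a prime theory disjoint from it. For a prime theory `w`
and a theory `B`, the formulas `a` with `a ∗ b ∉ w` for some `b ∈ B` form such an ideal,
because `∗` (and likewise `▷` and `∧`) is monotone, distributes over `∨` and annihilates `⊥`. -/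

namespace Deriv

variable {AP : Type}

theorem trans {P Q R : Formula AP} (h₁ : Deriv P Q) (h₂ : Deriv Q R) : Deriv P R :=
  .mp (.imp_intro (.and_left P h₂)) h₁

theorem and_fst (P Q : Formula AP) : Deriv (.and P Q) P := .and_elim1 (.ax _)

theorem and_snd (P Q : Formula AP) : Deriv (.and P Q) Q := .and_elim2 (.ax _)

theorem and_mono {P P' Q Q' : Formula AP} (hP : Deriv P P') (hQ : Deriv Q Q') :
    Deriv (.and P Q) (.and P' Q') :=
  .and_right ((and_fst P Q).trans hP) ((and_snd P Q).trans hQ)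

theorem and_comm (P Q : Formula AP) : Deriv (.and P Q) (.and Q P) :=
  .and_right (and_snd P Q) (and_fst P Q)

theorem and_or_left (P Q R : Formula AP) :
    Deriv (.and P (.or Q R)) (.or (.and P Q) (.and P R)) := by
  have hQ : Deriv Q (.imp P (.or (.and P Q) (.and P R))) :=
    .imp_intro (.or_right1 _ (and_comm Q P))
  have hR : Deriv R (.imp P (.or (.and P Q) (.and P R))) :=
    .imp_intro (.or_right2 _ (and_comm R P))
  exact .mp ((and_snd P _).trans (.or_left hQ hR)) (and_fst P _)

theorem and_or_right (P Q R : Formula AP) :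
    Deriv (.and (.or P Q) R) (.or (.and P R) (.and Q R)) :=
  ((and_comm _ R).trans (and_or_left R P Q)).trans
    (.or_left (.or_right1 _ (and_comm R P)) (.or_right2 _ (and_comm R Q)))

theorem sep_or_left (P Q R : Formula AP) :
    Deriv (.sep (.or P Q) R) (.or (.sep P R) (.sep Q R)) :=
  .wand_mp (.or_left (.wand_intro (.or_right1 _ (.ax _)))
    (.wand_intro (.or_right2 _ (.ax _)))) (.ax R)

theorem sep_or_right (P Q R : Formula AP) :
    Deriv (.sep P (.or Q R)) (.or (.sep P Q) (.sep P R)) :=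
  ((sep_comm P _).trans (sep_or_left Q R P)).trans
    (.or_left (.or_right1 _ (.sep_comm _ _)) (.or_right2 _ (.sep_comm _ _)))

theorem sep_bot_left (P : Formula AP) : Deriv (.sep .bot P) .bot :=
  .wand_mp (.bot_left _) (.ax P)

theorem sep_bot_right (P : Formula AP) : Deriv (.sep P .bot) .bot :=
  (sep_comm _ _).trans (sep_bot_left P)

theorem tri_or_left (P Q R : Formula AP) :
    Deriv (.tri (.or P Q) R) (.or (.tri P R) (.tri Q R)) :=
  .triimpR_mp (.or_left (.triimpR_intro (.or_right1 _ (.ax _)))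
    (.triimpR_intro (.or_right2 _ (.ax _)))) (.ax R)

theorem tri_or_right (P Q R : Formula AP) :
    Deriv (.tri P (.or Q R)) (.or (.tri P Q) (.tri P R)) :=
  .triimpL_mp (.or_left (.triimpL_intro (.or_right1 _ (.ax _)))
    (.triimpL_intro (.or_right2 _ (.ax _)))) (.ax P)

theorem tri_bot_left (P : Formula AP) : Deriv (.tri .bot P) .bot :=
  .triimpR_mp (.bot_left _) (.ax P)

theorem tri_bot_right (P : Formula AP) : Deriv (.tri P .bot) .bot :=
  .triimpL_mp (.bot_left _) (.ax P)

end Deriv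

namespace DIBI

variable {AP : Type} {f : Formula AP → Formula AP → Formula AP}

structure IsTheory (T : Set (Formula AP)) : Prop where
  closed : ∀ {φ ψ : Formula AP}, φ ∈ T → Deriv φ ψ → ψ ∈ T
  and_mem : ∀ {φ ψ : Formula AP}, φ ∈ T → ψ ∈ T → Formula.and φ ψ ∈ T
  top_mem : Formula.top ∈ T

structure IsPrime (T : Set (Formula AP)) : Prop extends IsTheory T where
  bot_not_mem : Formula.bot ∉ T
  mem_or_mem : ∀ {φ ψ : Formula AP}, Formula.or φ ψ ∈ T → φ ∈ T ∨ ψ ∈ T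

structure IsIdeal (J : Set (Formula AP)) : Prop where
  down : ∀ {φ ψ : Formula AP}, φ ∈ J → Deriv ψ φ → ψ ∈ J
  or_mem : ∀ {φ ψ : Formula AP}, φ ∈ J → ψ ∈ J → Formula.or φ ψ ∈ J
  bot_mem : Formula.bot ∈ J

def principal (P : Formula AP) : Set (Formula AP) := {φ | Deriv P φ}

theorem isTheory_principal (P : Formula AP) : IsTheory (principal P) :=
  ⟨fun h₁ h₂ => h₁.trans h₂, fun h₁ h₂ => .and_right h₁ h₂, .top_right P⟩

theorem mem_principal_self (P : Formula AP) : P ∈ principal P := .ax P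

def pairClosure (f : Formula AP → Formula AP → Formula AP) (A B : Set (Formula AP)) :
    Set (Formula AP) :=
  {φ | ∃ a ∈ A, ∃ b ∈ B, Deriv (f a b) φ}

theorem mem_pairClosure {A B : Set (Formula AP)}
    {a b : Formula AP} (ha : a ∈ A) (hb : b ∈ B) : f a b ∈ pairClosure f A B :=
  ⟨a, ha, b, hb, .ax _⟩

structure IsDistribConnective (f : Formula AP → Formula AP → Formula AP) : Prop where
  mono : ∀ {a a' b b'}, Deriv a a' → Deriv b b' → Deriv (f a b) (f a' b')
  or_left : ∀ a a' b, Deriv (f (.or a a') b) (.or (f a b) (f a' b))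
  or_right : ∀ a b b', Deriv (f a (.or b b')) (.or (f a b) (f a b'))
  bot_left : ∀ b, Deriv (f .bot b) .bot
  bot_right : ∀ a, Deriv (f a .bot) .bot

theorem IsDistribConnective.swap (hf : IsDistribConnective f) :
    IsDistribConnective (fun a b => f b a) :=
  ⟨fun h₁ h₂ => hf.mono h₂ h₁, fun a a' b => hf.or_right b a a',
    fun a b b' => hf.or_left b b' a, hf.bot_right, hf.bot_left⟩

theorem isDistribConnective_and : IsDistribConnective (Formula.and (AP := AP)) :=
  ⟨Deriv.and_mono, Deriv.and_or_right, Deriv.and_or_left,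
    fun b => Deriv.and_fst _ b, fun a => Deriv.and_snd a _⟩

theorem isDistribConnective_sep : IsDistribConnective (Formula.sep (AP := AP)) :=
  ⟨Deriv.sep_conj, Deriv.sep_or_left, Deriv.sep_or_right, Deriv.sep_bot_left,
    Deriv.sep_bot_right⟩

theorem isDistribConnective_tri : IsDistribConnective (Formula.tri (AP := AP)) :=
  ⟨Deriv.tri_conj, Deriv.tri_or_left, Deriv.tri_or_right, Deriv.tri_bot_left,
    Deriv.tri_bot_right⟩

theorem IsDistribConnective.isTheory_pairClosure (hf : IsDistribConnective f)
    {A B : Set (Formula AP)} (hA : IsTheory A) (hB : IsTheory B) :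
    IsTheory (pairClosure f A B) := by
  refine ⟨?_, ?_, ⟨.top, hA.top_mem, .top, hB.top_mem, .top_right _⟩⟩
  · rintro φ ψ ⟨a, ha, b, hb, hφ⟩ hψ
    exact ⟨a, ha, b, hb, hφ.trans hψ⟩
  · rintro φ ψ ⟨a, ha, b, hb, hφ⟩ ⟨a', ha', b', hb', hψ⟩
    exact ⟨a.and a', hA.and_mem ha ha', b.and b', hB.and_mem hb hb',
      .and_right ((hf.mono (Deriv.and_fst a a') (Deriv.and_fst b b')).trans hφ)
        ((hf.mono (Deriv.and_snd a a') (Deriv.and_snd b b')).trans hψ)⟩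

theorem isTheory_sUnion {c : Set (Set (Formula AP))} (hc : IsChain (· ⊆ ·) c)
    (hne : c.Nonempty) (hth : ∀ T ∈ c, IsTheory T) : IsTheory (⋃₀ c) := by
  refine ⟨?_, ?_, ?_⟩
  · rintro φ ψ ⟨T, hT, hφ⟩ h
    exact ⟨T, hT, (hth T hT).closed hφ h⟩
  · rintro φ ψ ⟨T, hT, hφ⟩ ⟨T', hT', hψ⟩
    rcases hc.total hT hT' with h | h
    · exact ⟨T', hT', (hth T' hT').and_mem (h hφ) hψ⟩
    · exact ⟨T, hT, (hth T hT).and_mem hφ (h hψ)⟩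
  · obtain ⟨T, hT⟩ := hne
    exact ⟨T, hT, (hth T hT).top_mem⟩

theorem exists_and_mem_of_maximal {J M : Set (Formula AP)} (hJ : IsIdeal J)
    (hM : Maximal (fun A => IsTheory A ∧ Disjoint A J) M) {φ : Formula AP} (hφ : φ ∉ M) :
    ∃ m ∈ M, Formula.and m φ ∈ J := by
  by_contra! hMφ
  set N := pairClosure Formula.and M (principal φ)
  have hN : IsTheory N := isDistribConnective_and.isTheory_pairClosure hM.prop.1
    (isTheory_principal φ)
  have hMN : M ⊆ N := fun m hm => ⟨m, hm, .top, .top_right φ, Deriv.and_fst m .top⟩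
  have hNJ : Disjoint N J := Set.disjoint_left.2 fun χ ⟨m, hm, b, hb, hχ⟩ hχJ =>
    hMφ m hm (hJ.down hχJ ((Deriv.and_mono (.ax m) hb).trans hχ))
  exact hφ (hM.2 ⟨hN, hNJ⟩ hMN ⟨.top, hM.prop.1.top_mem, φ, .ax φ, Deriv.and_snd _ _⟩)

theorem exists_prime_of_disjoint {T J : Set (Formula AP)} (hT : IsTheory T) (hJ : IsIdeal J)
    (hTJ : Disjoint T J) : ∃ Δ, IsPrime Δ ∧ T ⊆ Δ ∧ Disjoint Δ J := by
  obtain ⟨M, hTM, hM⟩ := zorn_subset_nonempty {A | IsTheory A ∧ Disjoint A J}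
    (fun c hc hchain hne => ⟨⋃₀ c, ⟨isTheory_sUnion hchain hne fun A hA => (hc hA).1,
      Set.disjoint_sUnion_left.2 fun A hA => (hc hA).2⟩, fun _ => Set.subset_sUnion_of_mem⟩)
    T ⟨hT, hTJ⟩
  obtain ⟨hMth, hMJ⟩ := hM.prop
  refine ⟨M, ⟨hMth, fun hbot => hMJ.notMem_of_mem_right hJ.bot_mem hbot, ?_⟩, hTM, hMJ⟩
  intro φ ψ hφψ
  by_contra! hnot
  obtain ⟨m, hm, hmφ⟩ := exists_and_mem_of_maximal hJ hM hnot.1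
  obtain ⟨m', hm', hmψ⟩ := exists_and_mem_of_maximal hJ hM hnot.2
  have hmem : Formula.and (.and m m') (.or φ ψ) ∈ M := hMth.and_mem (hMth.and_mem hm hm') hφψ
  refine hMJ.notMem_of_mem_left hmem (hJ.down (hJ.or_mem hmφ hmψ) ?_)
  exact (Deriv.and_or_left _ _ _).trans (.or_left
    (.or_right1 _ (Deriv.and_mono (Deriv.and_fst m m') (.ax φ)))
    (.or_right2 _ (Deriv.and_mono (Deriv.and_snd m m') (.ax ψ))))

theorem exists_prime_not_mem {T : Set (Formula AP)} (hT : IsTheory T) {ψ : Formula AP}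
    (hψ : ψ ∉ T) : ∃ Δ, IsPrime Δ ∧ T ⊆ Δ ∧ ψ ∉ Δ := by
  have hJ : IsIdeal {φ | Deriv φ ψ} :=
    ⟨fun hφ hχ => hχ.trans hφ, fun hφ hχ => .or_left hφ hχ, .bot_left ψ⟩
  obtain ⟨Δ, hΔ, hTΔ, hΔJ⟩ := exists_prime_of_disjoint hT hJ
    (Set.disjoint_left.2 fun φ hφ hφψ => hψ (hT.closed hφ hφψ))
  exact ⟨Δ, hΔ, hTΔ, fun hψΔ => hΔJ.notMem_of_mem_left hψΔ (.ax ψ)⟩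

def Combines (f : Formula AP → Formula AP → Formula AP) (A B w : Set (Formula AP)) : Prop :=
  ∀ a ∈ A, ∀ b ∈ B, f a b ∈ w

theorem combines_of_pairClosure_subset {A B w : Set (Formula AP)} (h : pairClosure f A B ⊆ w) :
    Combines f A B w :=
  fun _ ha _ hb => h (mem_pairClosure ha hb)

theorem IsDistribConnective.exists_prime_combines_left (hf : IsDistribConnective f)
    {A B w : Set (Formula AP)} (hA : IsTheory A) (hB : IsTheory B) (hw : IsPrime w)
    (h : Combines f A B w) : ∃ A', IsPrime A' ∧ A ⊆ A' ∧ Combines f A' B w := by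
  set J := {a | ∃ b ∈ B, f a b ∉ w}
  have hJ : IsIdeal J := by
    refine ⟨fun ⟨b, hb, hab⟩ hφ => ⟨b, hb, fun h' => hab (hw.closed h' (hf.mono hφ (.ax b)))⟩,
      fun {a a'} ⟨b, hb, hab⟩ ⟨b', hb', hab'⟩ => ⟨.and b b', hB.and_mem hb hb', fun h' => ?_⟩,
      ⟨.top, hB.top_mem, fun h' => hw.bot_not_mem (hw.closed h' (hf.bot_left _))⟩⟩
    rcases hw.mem_or_mem (hw.closed h' (hf.or_left a a' _)) with h'' | h''
    · exact hab (hw.closed h'' (hf.mono (.ax a) (Deriv.and_fst b b')))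
    · exact hab' (hw.closed h'' (hf.mono (.ax a') (Deriv.and_snd b b')))
  have hdisj : ∀ {C}, Disjoint C J ↔ Combines f C B w := by
    simp only [Set.disjoint_left, J, Set.mem_ofPred_eq, not_exists, not_and, not_not]
    rfl
  obtain ⟨A', hA', hAA', hA'J⟩ := exists_prime_of_disjoint hA hJ (hdisj.2 h)
  exact ⟨A', hA', hAA', hdisj.1 hA'J⟩

theorem IsDistribConnective.exists_prime_combines_right (hf : IsDistribConnective f)
    {A B w : Set (Formula AP)} (hA : IsTheory A) (hB : IsTheory B) (hw : IsPrime w)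
    (h : Combines f A B w) : ∃ B', IsPrime B' ∧ B ⊆ B' ∧ Combines f A B' w := by
  obtain ⟨B', hB', hBB', hcomb⟩ :=
    hf.swap.exists_prime_combines_left hB hA hw fun b hb a ha => h a ha b hb
  exact ⟨B', hB', hBB', fun a ha b hb => hcomb b hb a ha⟩

theorem IsDistribConnective.exists_prime_combines (hf : IsDistribConnective f)
    {A B w : Set (Formula AP)} (hA : IsTheory A) (hB : IsTheory B) (hw : IsPrime w)
    (h : Combines f A B w) :
    ∃ A' B', IsPrime A' ∧ IsPrime B' ∧ A ⊆ A' ∧ B ⊆ B' ∧ Combines f A' B' w := by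
  obtain ⟨A', hA', hAA', hA'B⟩ := hf.exists_prime_combines_left hA hB hw h
  obtain ⟨B', hB', hBB', hA'B'⟩ := hf.exists_prime_combines_right hA'.toIsTheory hB hw hA'B
  exact ⟨A', B', hA', hB', hAA', hBB', hA'B'⟩

theorem combines_swap {A B w : Set (Formula AP)} :
    Combines (fun a b => f b a) B A w ↔ Combines f A B w :=
  forall₂_comm

def PrimeTheory (AP : Type) : Type := {Γ : Set (Formula AP) // IsPrime Γ}

theorem IsDistribConnective.exists_prime_combines_of_mem (hf : IsDistribConnective f)
    {w : Set (Formula AP)} (hw : IsPrime w) {P Q : Formula AP} (h : f P Q ∈ w) :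
    ∃ y z : PrimeTheory AP, Combines f y.1 z.1 w ∧ P ∈ y.1 ∧ Q ∈ z.1 := by
  obtain ⟨y, z, hy, hz, hPy, hQz, hyz⟩ := hf.exists_prime_combines (isTheory_principal P)
    (isTheory_principal Q) hw fun a ha b hb => hw.closed h (hf.mono ha hb)
  exact ⟨⟨y, hy⟩, ⟨z, hz⟩, hyz, hPy (mem_principal_self P), hQz (mem_principal_self Q)⟩

/-- The countermodel step for the right adjoint `P ⇒ Q` of `f` (`→`, `-∗`, `▷→`, and `▷-` via
the mirrored `▷`): its introduction rule turns the conclusion into `P ⇒ Q ∈ Γ`. -/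
theorem IsDistribConnective.exists_deriv_of_forall_combines (hf : IsDistribConnective f)
    {Γ : Set (Formula AP)} (hΓ : IsTheory Γ) {P Q : Formula AP}
    (h : ∀ y z : PrimeTheory AP, P ∈ y.1 → Combines f Γ y.1 z.1 → Q ∈ z.1) :
    ∃ a ∈ Γ, Deriv (f a P) Q := by
  by_contra! hΓPQ
  have hQ : Q ∉ pairClosure f Γ (principal P) := fun ⟨a, ha, b, hb, hQ⟩ =>
    hΓPQ a ha ((hf.mono (.ax a) hb).trans hQ)
  obtain ⟨z, hz, hZz, hQz⟩ :=
    exists_prime_not_mem (hf.isTheory_pairClosure hΓ (isTheory_principal P)) hQ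
  obtain ⟨y, hy, hPy, hΓy⟩ := hf.exists_prime_combines_right hΓ (isTheory_principal P) hz
    (combines_of_pairClosure_subset hZz)
  exact hQz (h ⟨y, hy⟩ ⟨z, hz⟩ (hPy (mem_principal_self P)) hΓy)

theorem IsDistribConnective.exists_prime_reassoc (hf : IsDistribConnective f)
    (hassoc : ∀ a b c, Deriv (f (f a b) c) (f a (f b c)))
    {x y z t w : Set (Formula AP)} (hx : IsTheory x) (hy : IsTheory y) (hz : IsTheory z)
    (hw : IsPrime w) (htz : Combines f t z w) (hxy : Combines f x y t) :
    ∃ s : PrimeTheory AP, Combines f y z s.1 ∧ Combines f x s.1 w := by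
  have hbase : Combines f x (pairClosure f y z) w := fun a ha d ⟨b, hb, c, hc, hd⟩ =>
    hw.closed (htz _ (hxy a ha b hb) c hc) ((hassoc a b c).trans (hf.mono (.ax a) hd))
  obtain ⟨s, hs, hyzs, hxs⟩ :=
    hf.exists_prime_combines_right hx (hf.isTheory_pairClosure hy hz) hw hbase
  exact ⟨⟨s, hs⟩, combines_of_pairClosure_subset hyzs, hxs⟩

theorem IsDistribConnective.exists_prime_unit (hf : IsDistribConnective f)
    (hunit : ∀ b, Deriv b (f .emp b)) {x : Set (Formula AP)} (hx : IsPrime x) :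
    ∃ e : PrimeTheory AP, Formula.emp ∈ e.1 ∧ Combines f e.1 x x := by
  obtain ⟨e, he, hemp, hex⟩ := hf.exists_prime_combines_left (isTheory_principal .emp)
    hx.toIsTheory hx fun _ ha b hb => hx.closed hb ((hunit b).trans (hf.mono ha (.ax b)))
  exact ⟨⟨e, he⟩, hemp (mem_principal_self _), hex⟩

def canonicalLe (Γ Δ : PrimeTheory AP) : Prop := Γ.1 ⊆ Δ.1

def canonicalOplus (Δ Θ : PrimeTheory AP) : Set (PrimeTheory AP) :=
  {Γ | Combines .sep Δ.1 Θ.1 Γ.1}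

def canonicalOdot (Δ Θ : PrimeTheory AP) : Set (PrimeTheory AP) :=
  {Γ | Combines .tri Δ.1 Θ.1 Γ.1}

def canonicalE : Set (PrimeTheory AP) := {Γ | Formula.emp ∈ Γ.1}

def canonicalVal (p : AP) : Set (PrimeTheory AP) := {Γ | Formula.atom p ∈ Γ.1}

theorem canonical_rev_exchange {x y z y₁ y₂ z₁ z₂ : PrimeTheory AP}
    (hx : x ∈ canonicalOplus y z) (hy : y ∈ canonicalOdot y₁ y₂) (hz : z ∈ canonicalOdot z₁ z₂) :
    ∃ u v, u ∈ canonicalOplus y₁ z₁ ∧ v ∈ canonicalOplus y₂ z₂ ∧ x ∈ canonicalOdot u v := by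
  have hbase : Combines .tri (pairClosure .sep y₁.1 z₁.1) (pairClosure .sep y₂.1 z₂.1) x.1 := by
    rintro e ⟨a, ha, c, hc, he⟩ g ⟨b, hb, d, hd, hg⟩
    exact x.2.closed (hx _ (hy a ha b hb) _ (hz c hc d hd))
      ((Deriv.rev_ex a b c d).trans (.tri_conj he hg))
  obtain ⟨u, v, hu, hv, hyzu, hyzv, huv⟩ := isDistribConnective_tri.exists_prime_combines
    (isDistribConnective_sep.isTheory_pairClosure y₁.2.1 z₁.2.1)
    (isDistribConnective_sep.isTheory_pairClosure y₂.2.1 z₂.2.1) x.2 hbase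
  exact ⟨⟨u, hu⟩, ⟨v, hv⟩, combines_of_pairClosure_subset hyzu,
    combines_of_pairClosure_subset hyzv, huv⟩

theorem isDIBIFrame_canonical :
    IsDIBIFrame (canonicalLe (AP := AP)) canonicalOplus canonicalOdot canonicalE where
  le_refl _ := subset_rfl
  le_trans _ _ _ h₁ h₂ := h₁.trans h₂
  oplus_down _ _ z _ _ hz hx hy := ⟨z, subset_rfl, fun _ ha _ hb => hz _ (hx ha) _ (hy hb)⟩
  odot_up x y _ _ hz hzz' :=
    ⟨x, y, subset_rfl, subset_rfl, fun _ ha _ hb => hzz' (hz _ ha _ hb)⟩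
  oplus_comm _ _ z hz a ha b hb := z.2.closed (hz b hb a ha) (.sep_comm b a)
  oplus_assoc x y z _ w hw ht :=
    isDistribConnective_sep.exists_prime_reassoc Deriv.sep_assoc1 x.2.1 y.2.1 z.2.1 w.2 hw ht
  oplus_unit_exists x := isDistribConnective_sep.exists_prime_unit
    (fun b => (Deriv.sep_unit1 b).trans (.sep_comm b _)) x.2
  oplus_unit_coherence _ x _ he hx b hb := x.2.closed (hx b hb _ he) (.sep_unit2 b)
  odot_assoc x y z w := by
    refine ⟨fun ⟨t, hwt, ht⟩ => isDistribConnective_tri.exists_prime_reassoc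
      Deriv.tri_assoc1 x.2.1 y.2.1 z.2.1 w.2 hwt ht, fun ⟨s, hs, hws⟩ => ?_⟩
    -- the same step for the mirrored connective `fun a b => b ▷ a`
    obtain ⟨t, hxy, htz⟩ := isDistribConnective_tri.swap.exists_prime_reassoc
      (fun c b a => Deriv.tri_assoc2 a b c) z.2.1 y.2.1 x.2.1 w.2
      (combines_swap.2 hws) (combines_swap.2 hs)
    exact ⟨t, combines_swap.1 htz, combines_swap.1 hxy⟩
  odot_unit_exists_left x := isDistribConnective_tri.exists_prime_unit Deriv.tri_left_unit x.2
  odot_unit_exists_right x := by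
    obtain ⟨e, hemp, hxe⟩ :=
      isDistribConnective_tri.swap.exists_prime_unit Deriv.tri_right_unit1 x.2
    exact ⟨e, hemp, combines_swap.1 hxe⟩
  odot_coherence_right _ x _ he hx b hb := x.2.closed (hx b hb _ he) (.tri_right_unit2 b)
  unit_closure _ _ he hee' := hee' he
  rev_exchange _ _ _ _ _ _ _ := canonical_rev_exchange

theorem sat_canonical_iff (φ : Formula AP) (Γ : PrimeTheory AP) :
    Sat canonicalLe canonicalOplus canonicalOdot canonicalE canonicalVal φ Γ ↔ φ ∈ Γ.1 := by
  induction φ generalizing Γ with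
  | atom p => exact Iff.rfl
  | top => exact iff_of_true trivial Γ.2.top_mem
  | bot => exact iff_of_false id Γ.2.bot_not_mem
  | emp => exact Iff.rfl
  | and P Q ihP ihQ =>
    rw [Sat, ihP, ihQ]
    exact ⟨fun ⟨hP, hQ⟩ => Γ.2.and_mem hP hQ,
      fun h => ⟨Γ.2.closed h (Deriv.and_fst P Q), Γ.2.closed h (Deriv.and_snd P Q)⟩⟩
  | or P Q ihP ihQ =>
    rw [Sat, ihP, ihQ]
    exact ⟨Or.rec (fun h => Γ.2.closed h (.or_right1 Q (.ax P)))
      (fun h => Γ.2.closed h (.or_right2 P (.ax Q))), Γ.2.mem_or_mem⟩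
  | imp P Q ihP ihQ =>
    simp only [Sat, ihP, ihQ]
    refine ⟨fun h => ?_, fun h Δ hΓΔ hP =>
      Δ.2.closed (Δ.2.and_mem (hΓΔ h) hP) (.mp (Deriv.and_fst _ _) (Deriv.and_snd _ _))⟩
    -- `⊤` lies in both `y` and `Γ`, so `Γ ∧ y ⊆ z` puts `Γ` and `P` into `z`
    obtain ⟨a, ha, hd⟩ := isDistribConnective_and.exists_deriv_of_forall_combines Γ.2.1
      fun y z hPy hΓy => h z (fun a ha => z.2.closed (hΓy a ha _ y.2.top_mem) (Deriv.and_fst _ _))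
        (z.2.closed (hΓy _ Γ.2.top_mem P hPy) (Deriv.and_snd _ _))
    exact Γ.2.closed ha (.imp_intro hd)
  | sep P Q ihP ihQ =>
    simp only [Sat, ihP, ihQ]
    refine ⟨fun ⟨_, y, z, hle, hyz, hP, hQ⟩ => hle (hyz P hP Q hQ), fun h => ?_⟩
    obtain ⟨y, z, hyz, hP, hQ⟩ := isDistribConnective_sep.exists_prime_combines_of_mem Γ.2 h
    exact ⟨Γ, y, z, subset_rfl, hyz, hP, hQ⟩
  | wand P Q ihP ihQ =>
    simp only [Sat, ihP, ihQ]
    refine ⟨fun h => ?_, fun h y z hz hP => z.2.closed (hz _ h P hP) (.wand_mp (.ax _) (.ax P))⟩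
    obtain ⟨a, ha, hd⟩ := isDistribConnective_sep.exists_deriv_of_forall_combines Γ.2.1
      fun y z hPy hΓy => h y z hΓy hPy
    exact Γ.2.closed ha (.wand_intro hd)
  | tri P Q ihP ihQ =>
    simp only [Sat, ihP, ihQ]
    exact ⟨fun ⟨y, z, hyz, hP, hQ⟩ => hyz P hP Q hQ,
      isDistribConnective_tri.exists_prime_combines_of_mem Γ.2⟩
  | triimpR P Q ihP ihQ =>
    simp only [Sat, ihP, ihQ]
    refine ⟨fun h => ?_, fun h _ y z hle hz hP =>
      z.2.closed (hz _ (hle h) P hP) (.triimpR_mp (.ax _) (.ax P))⟩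
    obtain ⟨a, ha, hd⟩ := isDistribConnective_tri.exists_deriv_of_forall_combines Γ.2.1
      fun y z hPy hΓy => h Γ y z subset_rfl hΓy hPy
    exact Γ.2.closed ha (.triimpR_intro hd)
  | triimpL P Q ihP ihQ =>
    simp only [Sat, ihP, ihQ]
    refine ⟨fun h => ?_, fun h _ y z hle hz hP =>
      z.2.closed (hz P hP _ (hle h)) (.triimpL_mp (.ax _) (.ax P))⟩
    obtain ⟨a, ha, hd⟩ := isDistribConnective_tri.swap.exists_deriv_of_forall_combines Γ.2.1
      fun y z hPy hΓy => h Γ y z subset_rfl (combines_swap.1 hΓy) hPy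
    exact Γ.2.closed ha (.triimpL_intro hd)

section Soundness

variable {X : Type*} {le : X → X → Prop} {oplus odot : X → X → Set X}
  {E : Set X} {V : AP → Set X}

local notation:50 x " ⊩ " φ => Sat le oplus odot E V φ x

theorem sat_mono (hF : IsDIBIFrame le oplus odot E) (hV : ∀ p x y, x ∈ V p → le x y → y ∈ V p)
    (φ : Formula AP) {x y : X} (hxy : le x y) (hx : x ⊩ φ) : y ⊩ φ := by
  induction φ generalizing x y with
  | atom p => exact hV p x y hx hxy
  | top | bot => exact hx
  | emp => exact hF.unit_closure x y hx hxy
  | and P Q ihP ihQ => exact ⟨ihP hxy hx.1, ihQ hxy hx.2⟩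
  | or P Q ihP ihQ => exact hx.imp (ihP hxy) (ihQ hxy)
  | imp P Q => exact fun z hyz => hx z (hF.le_trans _ _ _ hxy hyz)
  | sep P Q =>
    obtain ⟨x', a, b, hx'x, hx', hP, hQ⟩ := hx
    exact ⟨x', a, b, hF.le_trans _ _ _ hx'x hxy, hx', hP, hQ⟩
  | wand P Q _ ihQ =>
    intro a z hz hP
    obtain ⟨z', hz'z, hz'⟩ := hF.oplus_down y a z x a hz hxy (hF.le_refl a)
    exact ihQ hz'z (hx a z' hz' hP)
  | tri P Q ihP ihQ =>
    obtain ⟨a, b, hx, hP, hQ⟩ := hx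
    obtain ⟨a', b', haa', hbb', hy⟩ := hF.odot_up a b x y hx hxy
    exact ⟨a', b', hy, ihP haa' hP, ihQ hbb' hQ⟩
  | triimpR P Q | triimpL P Q =>
    exact fun x' a z hyx' => hx x' a z (hF.le_trans _ _ _ hxy hyx')

variable {P Q R S : Formula AP} {x : X}

theorem sat_sep_emp (hF : IsDIBIFrame le oplus odot E) (hx : x ⊩ P) : x ⊩ .sep P .emp := by
  obtain ⟨e, he, hex⟩ := hF.oplus_unit_exists x
  exact ⟨x, x, e, hF.le_refl x, hF.oplus_comm e x x hex, hx, he⟩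

theorem sat_of_sat_sep_emp (hF : IsDIBIFrame le oplus odot E)
    (hV : ∀ p x y, x ∈ V p → le x y → y ∈ V p) (hx : x ⊩ .sep P .emp) : x ⊩ P := by
  obtain ⟨x', y, e, hx'x, hx', hP, he⟩ := hx
  exact sat_mono hF hV P (hF.le_trans _ _ _ (hF.oplus_unit_coherence e x' y he hx') hx'x) hP

theorem sat_sep_comm (hF : IsDIBIFrame le oplus odot E) (hx : x ⊩ .sep P Q) :
    x ⊩ .sep Q P := by
  obtain ⟨x', y, z, hx'x, hx', hP, hQ⟩ := hx
  exact ⟨x', z, y, hx'x, hF.oplus_comm y z x' hx', hQ, hP⟩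

theorem sat_sep_assoc (hF : IsDIBIFrame le oplus odot E) (hx : x ⊩ .sep (.sep P Q) R) :
    x ⊩ .sep P (.sep Q R) := by
  obtain ⟨x', t, c, hx'x, hx', ⟨t', a, b, ht't, ht', hP, hQ⟩, hR⟩ := hx
  obtain ⟨x'', hx''x', hx''⟩ := hF.oplus_down t c x' t' c hx' ht't (hF.le_refl c)
  obtain ⟨s, hs, hx''s⟩ := hF.oplus_assoc a b c t' x'' hx'' ht'
  exact ⟨x'', a, s, hF.le_trans _ _ _ hx''x' hx'x, hx''s, hP, s, b, c, hF.le_refl s, hs, hQ, hR⟩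

theorem sat_sep_assoc_symm (hF : IsDIBIFrame le oplus odot E) (hx : x ⊩ .sep P (.sep Q R)) :
    x ⊩ .sep (.sep P Q) R := by
  obtain ⟨x', a, t, hx'x, hx', hP, ⟨t', b, c, ht't, ht', hQ, hR⟩⟩ := hx
  obtain ⟨x'', hx''x', hx''⟩ := hF.oplus_down a t x' a t' hx' (hF.le_refl a) ht't
  obtain ⟨s, hs, hx''s⟩ :=
    hF.oplus_assoc c b a t' x'' (hF.oplus_comm a t' x'' hx'') (hF.oplus_comm b c t' ht')
  exact ⟨x'', s, c, hF.le_trans _ _ _ hx''x' hx'x, hF.oplus_comm c s x'' hx''s,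
    ⟨s, a, b, hF.le_refl s, hF.oplus_comm b a s hs, hP, hQ⟩, hR⟩

theorem sat_tri_assoc (hF : IsDIBIFrame le oplus odot E) (hx : x ⊩ .tri (.tri P Q) R) :
    x ⊩ .tri P (.tri Q R) := by
  obtain ⟨t, c, hx, ⟨a, b, ht, hP, hQ⟩, hR⟩ := hx
  obtain ⟨s, hs, hxs⟩ := (hF.odot_assoc a b c x).1 ⟨t, hx, ht⟩
  exact ⟨a, s, hxs, hP, b, c, hs, hQ, hR⟩

theorem sat_tri_assoc_symm (hF : IsDIBIFrame le oplus odot E) (hx : x ⊩ .tri P (.tri Q R)) :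
    x ⊩ .tri (.tri P Q) R := by
  obtain ⟨a, s, hx, hP, ⟨b, c, hs, hQ, hR⟩⟩ := hx
  obtain ⟨t, hxt, ht⟩ := (hF.odot_assoc a b c x).2 ⟨s, hs, hx⟩
  exact ⟨t, c, hxt, ⟨a, b, ht, hP, hQ⟩, hR⟩

theorem sat_rev_ex (hF : IsDIBIFrame le oplus odot E) (hx : x ⊩ .sep (.tri P Q) (.tri R S)) :
    x ⊩ .tri (.sep P R) (.sep Q S) := by
  obtain ⟨x', y, z, hx'x, hx', ⟨y₁, y₂, hy, hP, hQ⟩, ⟨z₁, z₂, hz, hR, hS⟩⟩ := hx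
  obtain ⟨u, v, hu, hv, hx'uv⟩ := hF.rev_exchange x' y z y₁ y₂ z₁ z₂ hx' hy hz
  obtain ⟨u', v', huu', hvv', hxuv⟩ := hF.odot_up u v x' x hx'uv hx'x
  exact ⟨u', v', hxuv, ⟨u, y₁, z₁, huu', hu, hP, hR⟩, ⟨v, y₂, z₂, hvv', hv, hQ, hS⟩⟩

theorem soundness (hF : IsDIBIFrame le oplus odot E) (hV : ∀ p x y, x ∈ V p → le x y → y ∈ V p)
    (h : Deriv P Q) (x : X) (hx : x ⊩ P) : x ⊩ Q := by
  induction h generalizing x with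
  | ax => exact hx
  | top_right => trivial
  | bot_left => exact hx.elim
  | or_left _ _ ih₁ ih₂ => exact hx.elim (ih₁ x) (ih₂ x)
  | or_right1 _ _ ih => exact .inl (ih x hx)
  | or_right2 _ _ ih => exact .inr (ih x hx)
  | and_right _ _ ih₁ ih₂ => exact ⟨ih₁ x hx, ih₂ x hx⟩
  | and_left _ _ ih => exact ih x hx.2
  | and_elim1 _ ih => exact (ih x hx).1
  | and_elim2 _ ih => exact (ih x hx).2
  | imp_intro _ ih => exact fun y hxy hQ => ih y ⟨sat_mono hF hV _ hxy hx, hQ⟩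
  | mp _ _ ih₁ ih₂ => exact ih₁ x hx x (hF.le_refl x) (ih₂ x hx)
  | wand_intro _ ih => exact fun y z hz hQ => ih z ⟨z, x, y, hF.le_refl z, hz, hx, hQ⟩
  | wand_mp _ _ ih₁ ih₂ =>
    obtain ⟨x', y, z, hx'x, hx', hP, hS⟩ := hx
    exact sat_mono hF hV _ hx'x (ih₁ y hP z x' hx' (ih₂ z hS))
  | triimpR_intro _ ih =>
    exact fun x' y z hxx' hz hQ => ih z ⟨x', y, hz, sat_mono hF hV _ hxx' hx, hQ⟩
  | triimpR_mp _ _ ih₁ ih₂ =>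
    obtain ⟨y, z, hx, hP, hS⟩ := hx
    exact ih₁ y hP y z x (hF.le_refl y) hx (ih₂ z hS)
  | triimpL_intro _ ih =>
    exact fun x' y z hxx' hz hP => ih z ⟨y, x', hz, hP, sat_mono hF hV _ hxx' hx⟩
  | triimpL_mp _ _ ih₁ ih₂ =>
    obtain ⟨y, z, hx, hS, hP⟩ := hx
    exact ih₁ z hP z y x (hF.le_refl z) hx (ih₂ y hS)
  | sep_unit1 => exact sat_sep_emp hF hx
  | sep_unit2 => exact sat_of_sat_sep_emp hF hV hx
  | sep_conj _ _ ih₁ ih₂ =>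
    obtain ⟨x', y, z, hx'x, hx', hP, hQ⟩ := hx
    exact ⟨x', y, z, hx'x, hx', ih₁ y hP, ih₂ z hQ⟩
  | sep_comm => exact sat_sep_comm hF hx
  | sep_assoc1 => exact sat_sep_assoc hF hx
  | sep_assoc2 => exact sat_sep_assoc_symm hF hx
  | tri_left_unit =>
    obtain ⟨e, he, hex⟩ := hF.odot_unit_exists_left x
    exact ⟨e, x, hex, he, hx⟩
  | tri_right_unit1 =>
    obtain ⟨e, he, hxe⟩ := hF.odot_unit_exists_right x
    exact ⟨x, e, hxe, hx, he⟩
  | tri_right_unit2 =>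
    obtain ⟨y, e, hx, hP, he⟩ := hx
    exact sat_mono hF hV _ (hF.odot_coherence_right e x y he hx) hP
  | tri_conj _ _ ih₁ ih₂ =>
    obtain ⟨y, z, hx, hP, hQ⟩ := hx
    exact ⟨y, z, hx, ih₁ y hP, ih₂ z hQ⟩
  | tri_assoc1 => exact sat_tri_assoc hF hx
  | tri_assoc2 => exact sat_tri_assoc_symm hF hx
  | rev_ex => exact sat_rev_ex hF hx

end Soundness

theorem completeness {AP : Type} {P Q : Formula AP}
    (h : ∀ x : PrimeTheory AP, Sat canonicalLe canonicalOplus canonicalOdot canonicalE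
      canonicalVal P x → Sat canonicalLe canonicalOplus canonicalOdot canonicalE canonicalVal Q x) :
    Deriv P Q := by
  by_contra hPQ
  obtain ⟨Γ, hΓ, hPΓ, hQΓ⟩ := exists_prime_not_mem (isTheory_principal P) hPQ
  exact hQΓ ((sat_canonical_iff Q ⟨Γ, hΓ⟩).1
    (h ⟨Γ, hΓ⟩ ((sat_canonical_iff P ⟨Γ, hΓ⟩).2 (hPΓ (mem_principal_self P)))))

end DIBI

/-- **Soundness and completeness of DIBI for its Kripke semantics.** A sequent
`P ⊢ Q` is derivable in the DIBI Hilbert system iff `P ⊨ Q`: in every DIBI frame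
with a persistent valuation, every state satisfying `P` satisfies `Q`. -/
theorem kripke_soundness_completeness {AP : Type} (P Q : Formula AP) :
    Deriv P Q ↔
      ∀ (X : Type) (le : X → X → Prop) (oplus odot : X → X → Set X) (E : Set X),
        IsDIBIFrame le oplus odot E →
        ∀ V : AP → Set X, (∀ p x y, x ∈ V p → le x y → y ∈ V p) →
        ∀ x : X, Sat le oplus odot E V P x → Sat le oplus odot E V Q x :=
  ⟨fun h _ _ _ _ _ hF _ hV => DIBI.soundness hF hV h, fun h => DIBI.completeness
    (h _ _ _ _ _ DIBI.isDIBIFrame_canonical DIBI.canonicalVal fun _ _ _ hx hxy => hxy hx)⟩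
end

section
/- Semi-graphoid Symmetry is derivable in DIBI: for all DIBI formulas P, Q, R, the sequent ⊢ P ▷ (Q ∗ R) → P ▷ (R ∗ Q) is derivable in the DIBI Hilbert system (i.e., ⊤ ⊢ P ▷ (Q ∗ R) → P ▷ (R ∗ Q)). -/
theorem Deriv.imp_of_deriv {AP : Type*} {P Q : Formula AP} (S : Formula AP) (h : Deriv P Q) :
    Deriv S (.imp P Q) :=
  .imp_intro (.and_left S h)

theorem Deriv.tri_sep_comm {AP : Type*} (P Q R : Formula AP) :
    Deriv (.tri P (.sep Q R)) (.tri P (.sep R Q)) :=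
  .tri_conj (.ax P) (.sep_comm Q R)

/-- **Semi-graphoid Symmetry is derivable in DIBI:**
`⊤ ⊢ P ▷ (Q ∗ R) → P ▷ (R ∗ Q)`. -/
theorem semigraphoid_symmetry_derivable {AP : Type*} (P Q R : Formula AP) :
    Deriv (.top : Formula AP)
      (.imp (.tri P (.sep Q R)) (.tri P (.sep R Q))) :=
  (Deriv.tri_sep_comm P Q R).imp_of_deriv .top
end

section
/- Semi-graphoid Decomposition is derivable in DIBI: for all DIBI formulas P, Q, R, S, the sequent ⊢ P ▷ (Q ∗ (R ∧ S)) → ((P ▷ (Q ∗ R)) ∧ (P ▷ (Q ∗ S))) is derivable in the DIBI Hilbert system. -/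
namespace Deriv

variable {AP : Type*}

theorem imp_of_deriv_s8 {P Q : Formula AP} (R : Formula AP) (h : Deriv P Q) : Deriv R (.imp P Q) :=
  imp_intro (and_left R h)

theorem sep_mono_right {P Q Q' : Formula AP} (h : Deriv Q Q') : Deriv (.sep P Q) (.sep P Q') :=
  sep_conj (ax P) h

theorem tri_mono_right {P Q Q' : Formula AP} (h : Deriv Q Q') : Deriv (.tri P Q) (.tri P Q') :=
  tri_conj (ax P) h

theorem map_and_of_monotone {f : Formula AP → Formula AP}
    (hf : ∀ {A B : Formula AP}, Deriv A B → Deriv (f A) (f B)) (R S : Formula AP) :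
    Deriv (f (.and R S)) (.and (f R) (f S)) :=
  and_right (hf (and_elim1 (ax _))) (hf (and_elim2 (ax _)))

end Deriv

/-- **Semi-graphoid Decomposition is derivable in DIBI:**
`⊤ ⊢ P ▷ (Q ∗ (R ∧ S)) → ((P ▷ (Q ∗ R)) ∧ (P ▷ (Q ∗ S)))`. -/
theorem semigraphoid_decomposition_derivable {AP : Type*} (P Q R S : Formula AP) :
    Deriv (.top : Formula AP)
      (.imp (.tri P (.sep Q (.and R S)))
            (.and (.tri P (.sep Q R)) (.tri P (.sep Q S)))) :=
  .imp_of_deriv _ <|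
    .map_and_of_monotone (f := fun X => .tri P (.sep Q X))
      (fun h => .tri_mono_right (.sep_mono_right h)) R S
end

section
/- Exchange equality for input-preserving Markov kernels: for f1, f2, f3, f4 ∈ M^D, (i) if (f1 ⊙ f3) ⊕ (f2 ⊙ f4) is defined then (f1 ⊕ f2) ⊙ (f3 ⊕ f4) is also defined and (f1 ⊕ f2) ⊙ (f3 ⊕ f4) = (f1 ⊙ f3) ⊕ (f2 ⊙ f4); (ii) if f1 ⊙ f3 and f2 ⊙ f4 are defined and (f1 ⊕ f2) ⊙ (f3 ⊕ f4) is defined, then (f1 ⊙ f3) ⊕ (f2 ⊙ f4) is defined and the two composites are equal. -/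
open scoped ENNReal

/-- A memory over a set `S` of variables: an assignment of a value to each
variable in `S`. -/
def Mem (Val Var : Type) (S : Set Var) : Type := S → Val

/-- Restriction (projection) of a memory to a smaller domain. -/
def restr {Val Var : Type} {S T : Set Var} (h : T ⊆ S) (m : Mem Val Var S) :
    Mem Val Var T :=
  fun t => m ⟨t.1, h t.2⟩

/-- Two memories (over possibly different domains) agree if they coincide on the
intersection of their domains.  For `T ⊆ S`, `Agree m r` says exactly that `r`
is the restriction `m^T`. -/
def Agree {Val Var : Type} {S T : Set Var} (m : Mem Val Var S) (r : Mem Val Var T) : Prop :=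
  ∀ (i : Var) (h1 : i ∈ S) (h2 : i ∈ T), m ⟨i, h1⟩ = r ⟨i, h2⟩
/-- A (sub)distribution as a mass function into `ℝ≥0∞`; `IsDist μ` says the total
mass is `1`, i.e. `μ` is a (finitely supported, as all types involved are finite)
probability distribution. -/
def IsDist {α : Type*} (μ : α → ℝ≥0∞) : Prop := ∑' a, μ a = 1

open Classical in
/-- Marginalization of a mass function on memories over `S` to memories over `T`
(intended for `T ⊆ S`). -/
noncomputable def marg {Val Var : Type} {S : Set Var} (μ : Mem Val Var S → ℝ≥0∞)
    (T : Set Var) : Mem Val Var T → ℝ≥0∞ :=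
  fun r => ∑' m : Mem Val Var S, if Agree m r then μ m else 0

open Classical in
/-- The point mass (Dirac distribution) at a memory. -/
noncomputable def dirac {Val Var : Type} {S : Set Var} (d : Mem Val Var S) :
    Mem Val Var S → ℝ≥0∞ :=
  fun r => if r = d then 1 else 0

/-- A Markov-kernel-shaped map on memories, with explicit domain and range. -/
structure PKernel (Val Var : Type) where
  dom : Set Var
  ran : Set Var
  f : Mem Val Var dom → Mem Val Var ran → ℝ≥0∞

/-- Membership in `M^D`: `K` is a Markov kernel (every output is a probability
distribution) that preserves its input to its output (the marginal of `K.f d`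
on the domain is the point mass at `d`). -/
def InMD {Val Var : Type} (K : PKernel Val Var) : Prop :=
  K.dom ⊆ K.ran ∧ (∀ d, IsDist (K.f d)) ∧ (∀ d, marg (K.f d) K.dom = dirac d)

/-- Definedness condition for parallel composition. -/
def OplusDef {Val Var : Type} (K1 K2 : PKernel Val Var) : Prop :=
  K1.ran ∩ K2.ran = K1.dom ∩ K2.dom

/-- Parallel composition of kernels. -/
noncomputable def poplus {Val Var : Type} (K1 K2 : PKernel Val Var) : PKernel Val Var where
  dom := K1.dom ∪ K2.dom
  ran := K1.ran ∪ K2.ran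
  f := fun d m =>
    K1.f (restr Set.subset_union_left d) (restr Set.subset_union_left m) *
    K2.f (restr Set.subset_union_right d) (restr Set.subset_union_right m)

open Classical in
/-- Sequential (Kleisli) composition of kernels, defined when
`K1.ran = K2.dom` (and returning the zero kernel otherwise). -/
noncomputable def podot {Val Var : Type} (K1 K2 : PKernel Val Var) : PKernel Val Var where
  dom := K1.dom
  ran := K2.ran
  f := fun d m =>
    if h : K1.ran = K2.dom then
      ∑' m' : Mem Val Var K1.ran, K1.f d m' * K2.f (restr (le_of_eq h.symm) m') m
    else 0

open Classical in
/-- The identity (unit) kernel on memories over `R`. -/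
noncomputable def unitK (Val Var : Type) (R : Set Var) : PKernel Val Var where
  dom := R
  ran := R
  f := fun d => dirac d

/-- The preorder on kernels: `f ⊑ g` iff `g = (f ⊕ unit_R) ⊙ h` for some set of
variables `R` and some `h ∈ M^D` (with both compositions defined). -/
def ple {Val Var : Type} (K1 K2 : PKernel Val Var) : Prop :=
  ∃ (R : Set Var) (h : PKernel Val Var), InMD h ∧
    OplusDef K1 (unitK Val Var R) ∧
    (poplus K1 (unitK Val Var R)).ran = h.dom ∧
    K2 = podot (poplus K1 (unitK Val Var R)) h

/-!
A memory over `R₁ ∪ R₂` is the same as a pair of memories over `R₁` and `R₂` that agree on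
`R₁ ∩ R₂`. With `R₁ = f1.ran = f3.dom` and `R₂ = f2.ran = f4.dom`, the Kleisli sum defining
`(f1 ⊕ f2) ⊙ (f3 ⊕ f4)` is therefore the product of the sums defining `f1 ⊙ f3` and `f2 ⊙ f4`,
restricted to agreeing pairs. Input preservation makes every output of `f1` (resp. `f2`) in the
support restrict to the common input on its domain, and `R₁ ∩ R₂ = f1.dom ∩ f2.dom` when `f1 ⊕ f2`
is defined, so every pair in the support agrees and the restriction is vacuous. The definedness
conditions are equalities in the chain `f1.dom ∩ f2.dom ⊆ R₁ ∩ R₂ ⊆ f3.ran ∩ f4.ran`.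
-/

open Set

section Memories

variable {Val Var : Type} {R₁ R₂ : Set Var}

open Classical in
noncomputable def glue (a : Mem Val Var R₁) (b : Mem Val Var R₂) : Mem Val Var (R₁ ∪ R₂) :=
  fun i => if h : i.1 ∈ R₁ then a ⟨i.1, h⟩ else b ⟨i.1, i.2.resolve_left h⟩

lemma restr_glue_left (a : Mem Val Var R₁) (b : Mem Val Var R₂) :
    restr subset_union_left (glue a b) = a := by
  funext i
  exact dif_pos i.2

lemma restr_glue_right {a : Mem Val Var R₁} {b : Mem Val Var R₂} (hab : Agree a b) :
    restr subset_union_right (glue a b) = b := by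
  funext i
  by_cases hi : i.1 ∈ R₁
  · exact (dif_pos hi).trans (hab i.1 hi i.2)
  · exact dif_neg hi

lemma restr_union_injective :
    Function.Injective fun m : Mem Val Var (R₁ ∪ R₂) =>
      (restr subset_union_left m, restr subset_union_right m) := by
  intro m m' h
  funext i
  rcases i with ⟨i, hi₁ | hi₂⟩
  · exact congrFun (congrArg Prod.fst h) ⟨i, hi₁⟩
  · exact congrFun (congrArg Prod.snd h) ⟨i, hi₂⟩

lemma tsum_mem_union_mul (F : Mem Val Var R₁ → ℝ≥0∞) (G : Mem Val Var R₂ → ℝ≥0∞)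
    (hFG : ∀ a b, F a * G b ≠ 0 → Agree a b) :
    ∑' m : Mem Val Var (R₁ ∪ R₂), F (restr subset_union_left m) * G (restr subset_union_right m)
      = (∑' a, F a) * ∑' b, G b := by
  have hsupp : Function.support (fun p : Mem Val Var R₁ × Mem Val Var R₂ => F p.1 * G p.2) ⊆
      range fun m : Mem Val Var (R₁ ∪ R₂) =>
        (restr subset_union_left m, restr subset_union_right m) := fun p hp =>
    ⟨glue p.1 p.2, Prod.ext (restr_glue_left p.1 p.2) (restr_glue_right (hFG p.1 p.2 hp))⟩
  rw [restr_union_injective.tsum_eq hsupp (f := fun p => F p.1 * G p.2),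
    ENNReal.tsum_prod (f := fun a b => F a * G b), ← ENNReal.tsum_mul_right]
  simp only [ENNReal.tsum_mul_left]

lemma apply_le_marg_restr {S T : Set Var} (hTS : T ⊆ S) (μ : Mem Val Var S → ℝ≥0∞)
    (m : Mem Val Var S) : μ m ≤ marg μ T (restr hTS m) := by
  classical
  have hagree : Agree m (restr hTS m) := fun _ _ _ => rfl
  simpa [marg, hagree] using
    ENNReal.le_tsum (f := fun m' : Mem Val Var S => if Agree m' (restr hTS m) then μ m' else 0) m

end Memories

section Kernels

variable {Val Var : Type}

lemma InMD.restr_eq_of_apply_ne_zero {K : PKernel Val Var} (hK : InMD K) {d : Mem Val Var K.dom}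
    {m : Mem Val Var K.ran} (hm : K.f d m ≠ 0) : restr hK.1 m = d := by
  by_contra hne
  have hmarg : marg (K.f d) K.dom (restr hK.1 m) = 0 := by
    rw [hK.2.2 d, dirac, if_neg hne]
  exact hm (le_antisymm (hmarg ▸ apply_le_marg_restr hK.1 (K.f d) m) zero_le)

lemma InMD.agree_of_apply_ne_zero {K₁ K₂ : PKernel Val Var} (h₁ : InMD K₁) (h₂ : InMD K₂)
    (h₁₂ : OplusDef K₁ K₂) (d : Mem Val Var (K₁.dom ∪ K₂.dom)) {a : Mem Val Var K₁.ran}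
    {b : Mem Val Var K₂.ran} (ha : K₁.f (restr subset_union_left d) a ≠ 0)
    (hb : K₂.f (restr subset_union_right d) b ≠ 0) : Agree a b := by
  intro i hi₁ hi₂
  have hi : i ∈ K₁.dom ∩ K₂.dom := h₁₂ ▸ ⟨hi₁, hi₂⟩
  calc a ⟨i, hi₁⟩ = d ⟨i, Or.inl hi.1⟩ := congrFun (h₁.restr_eq_of_apply_ne_zero ha) ⟨i, hi.1⟩
    _ = b ⟨i, hi₂⟩ := (congrFun (h₂.restr_eq_of_apply_ne_zero hb) ⟨i, hi.2⟩).symm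

lemma podot_poplus_eq_poplus_podot {f1 f2 f3 f4 : PKernel Val Var} (h1 : InMD f1) (h2 : InMD f2)
    (h12 : OplusDef f1 f2) (e13 : f1.ran = f3.dom) (e24 : f2.ran = f4.dom) :
    podot (poplus f1 f2) (poplus f3 f4) = poplus (podot f1 f3) (podot f2 f4) := by
  obtain ⟨_, _, g3⟩ := f3
  obtain ⟨_, _, g4⟩ := f4
  dsimp only at e13 e24
  subst e13 e24
  unfold podot poplus
  dsimp only
  congr 1
  funext d m
  rw [dif_pos rfl, dif_pos rfl, dif_pos rfl]
  refine (tsum_congr fun _ => mul_mul_mul_comm _ _ _ _).trans <| tsum_mem_union_mul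
    (fun a => f1.f (restr subset_union_left d) a * g3 a (restr subset_union_left m))
    (fun b => f2.f (restr subset_union_right d) b * g4 b (restr subset_union_right m))
    fun a b hab => ?_
  exact h1.agree_of_apply_ne_zero h2 h12 d (left_ne_zero_of_mul (left_ne_zero_of_mul hab))
    (left_ne_zero_of_mul (right_ne_zero_of_mul hab))

lemma OplusDef.of_podot {f1 f2 f3 f4 : PKernel Val Var} (h1 : InMD f1) (h2 : InMD f2)
    (h3 : InMD f3) (h4 : InMD f4) (e13 : f1.ran = f3.dom) (e24 : f2.ran = f4.dom)
    (h : OplusDef (podot f1 f3) (podot f2 f4)) : OplusDef f1 f2 := by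
  refine subset_antisymm ?_ (inter_subset_inter h1.1 h2.1)
  calc f1.ran ∩ f2.ran = f3.dom ∩ f4.dom := by rw [e13, e24]
    _ ⊆ f3.ran ∩ f4.ran := inter_subset_inter h3.1 h4.1
    _ = f1.dom ∩ f2.dom := h

lemma oplusDef_iff_oplusDef_podot {f1 f2 f3 f4 : PKernel Val Var} (e13 : f1.ran = f3.dom)
    (e24 : f2.ran = f4.dom) (h12 : OplusDef f1 f2) :
    OplusDef f3 f4 ↔ OplusDef (podot f1 f3) (podot f2 f4) := by
  change f3.ran ∩ f4.ran = f3.dom ∩ f4.dom ↔ f3.ran ∩ f4.ran = f1.dom ∩ f2.dom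
  rw [← e13, ← e24, h12]

end Kernels

theorem MD_exchange_equality_general {Val Var : Type}
    (f1 f2 f3 f4 : PKernel Val Var)
    (h1 : InMD f1) (h2 : InMD f2) (h3 : InMD f3) (h4 : InMD f4) :
    ((f1.ran = f3.dom → f2.ran = f4.dom → OplusDef (podot f1 f3) (podot f2 f4) →
        OplusDef f1 f2 ∧ OplusDef f3 f4 ∧ (poplus f1 f2).ran = (poplus f3 f4).dom ∧
        podot (poplus f1 f2) (poplus f3 f4) = poplus (podot f1 f3) (podot f2 f4)) ∧
     (f1.ran = f3.dom → f2.ran = f4.dom →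
        OplusDef f1 f2 → OplusDef f3 f4 → (poplus f1 f2).ran = (poplus f3 f4).dom →
        OplusDef (podot f1 f3) (podot f2 f4) ∧
        podot (poplus f1 f2) (poplus f3 f4) = poplus (podot f1 f3) (podot f2 f4))) := by
  refine ⟨fun e13 e24 hop => ?_, fun e13 e24 h12 h34 _ => ?_⟩
  · have h12 : OplusDef f1 f2 := .of_podot h1 h2 h3 h4 e13 e24 hop
    exact ⟨h12, (oplusDef_iff_oplusDef_podot e13 e24 h12).2 hop, congrArg₂ (· ∪ ·) e13 e24,
      podot_poplus_eq_poplus_podot h1 h2 h12 e13 e24⟩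
  · exact ⟨(oplusDef_iff_oplusDef_podot e13 e24 h12).1 h34,
      podot_poplus_eq_poplus_podot h1 h2 h12 e13 e24⟩

/-- **Exchange equality for input-preserving Markov kernels.** For
`f1, f2, f3, f4 ∈ M^D`:
(i) if `(f1 ⊙ f3) ⊕ (f2 ⊙ f4)` is defined, then `(f1 ⊕ f2) ⊙ (f3 ⊕ f4)` is also
defined and the two composites are equal;
(ii) if `f1 ⊙ f3` and `f2 ⊙ f4` are defined and `(f1 ⊕ f2) ⊙ (f3 ⊕ f4)` is defined,
then `(f1 ⊙ f3) ⊕ (f2 ⊙ f4)` is defined and the two composites are equal. -/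
theorem MD_exchange_equality {Val Var : Type} [Fintype Val] [Fintype Var]
    (f1 f2 f3 f4 : PKernel Val Var)
    (h1 : InMD f1) (h2 : InMD f2) (h3 : InMD f3) (h4 : InMD f4) :
    ((f1.ran = f3.dom → f2.ran = f4.dom → OplusDef (podot f1 f3) (podot f2 f4) →
        OplusDef f1 f2 ∧ OplusDef f3 f4 ∧ (poplus f1 f2).ran = (poplus f3 f4).dom ∧
        podot (poplus f1 f2) (poplus f3 f4) = poplus (podot f1 f3) (podot f2 f4)) ∧
     (f1.ran = f3.dom → f2.ran = f4.dom →
        OplusDef f1 f2 → OplusDef f3 f4 → (poplus f1 f2).ran = (poplus f3 f4).dom →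
        OplusDef (podot f1 f3) (podot f2 f4) ∧
        podot (poplus f1 f2) (poplus f3 f4) = poplus (podot f1 f3) (podot f2 f4))) :=
  MD_exchange_equality_general f1 f2 f3 f4 h1 h2 h3 h4
end

section
/- The relational model is a DIBI frame: the structure (M^P, ⊑, ⊕, ⊙, M^P), where ⊕ and ⊙ are the partial deterministic parallel and sequential compositions of input-preserving powerset kernels (regarded as operations returning at most a singleton set) and the unit set is all of M^P, satisfies all twelve DIBI frame conditions; in particular ⊑ is a preorder on M^P. -/
open scoped ENNReal

/-- Projection (marginalization) of a set of memories over `S` to memories over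
`T` (intended for `T ⊆ S`, where it yields `{m^T : m ∈ R}`). -/
def margS {Val Var : Type} {S : Set Var} (R : Set (Mem Val Var S)) (T : Set Var) :
    Set (Mem Val Var T) :=
  {r | ∃ m ∈ R, Agree m r}

/-- The natural join of two relations (sets of memories). -/
def natJoin {Val Var : Type} {S T : Set Var}
    (R1 : Set (Mem Val Var S)) (R2 : Set (Mem Val Var T)) :
    Set (Mem Val Var (S ∪ T)) :=
  {m | restr Set.subset_union_left m ∈ R1 ∧ restr Set.subset_union_right m ∈ R2}

/-- A powerset-kernel-shaped map on memories, with explicit domain and range. -/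
structure RKernel (Val Var : Type) where
  dom : Set Var
  ran : Set Var
  f : Mem Val Var dom → Set (Mem Val Var ran)

/-- Membership in `M^P`: `K` is a powerset kernel preserving its input to its
output: the projection of `K.f d` to the domain is `{d}`. -/
def InMP {Val Var : Type} (K : RKernel Val Var) : Prop :=
  K.dom ⊆ K.ran ∧ ∀ d, margS (K.f d) K.dom = {d}

/-- Definedness condition for parallel composition. -/
def ROplusDef {Val Var : Type} (K1 K2 : RKernel Val Var) : Prop :=
  K1.ran ∩ K2.ran = K1.dom ∩ K2.dom

/-- Parallel composition of powerset kernels. -/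
def roplus {Val Var : Type} (K1 K2 : RKernel Val Var) : RKernel Val Var where
  dom := K1.dom ∪ K2.dom
  ran := K1.ran ∪ K2.ran
  f := fun d =>
    natJoin (K1.f (restr Set.subset_union_left d)) (K2.f (restr Set.subset_union_right d))

open Classical in
/-- Sequential (Kleisli) composition of powerset kernels, defined when
`K1.ran = K2.dom` (and returning the empty kernel otherwise). -/
noncomputable def rodot {Val Var : Type} (K1 K2 : RKernel Val Var) : RKernel Val Var where
  dom := K1.dom
  ran := K2.ran
  f := fun d =>
    if h : K1.ran = K2.dom then
      {v | ∃ u ∈ K1.f d, v ∈ K2.f (restr (le_of_eq h.symm) u)}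
    else ∅

/-- The identity (unit) powerset kernel on memories over `R`. -/
def unitR (Val Var : Type) (R : Set Var) : RKernel Val Var where
  dom := R
  ran := R
  f := fun d => {d}

/-- The preorder on powerset kernels: `f ⊑ g` iff `g = (f ⊕ unit_R) ⊙ h` for some
set of variables `R` and some `h ∈ M^P` (with both compositions defined). -/
def rle {Val Var : Type} (K1 K2 : RKernel Val Var) : Prop :=
  ∃ (R : Set Var) (h : RKernel Val Var), InMP h ∧
    ROplusDef K1 (unitR Val Var R) ∧
    (roplus K1 (unitR Val Var R)).ran = h.dom ∧
    K2 = rodot (roplus K1 (unitR Val Var R)) h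

/-- The carrier of the relational model: input-preserving powerset kernels. -/
def MP (Val Var : Type) : Type := {K : RKernel Val Var // InMP K}

/-- Parallel composition, as a non-deterministic (in fact, partial deterministic)
operation on `M^P`: the singleton of `x ⊕ y` when defined, and `∅` otherwise. -/
def mpOplus {Val Var : Type} (x y : MP Val Var) : Set (MP Val Var) :=
  {z | ROplusDef x.1 y.1 ∧ z.1 = roplus x.1 y.1}

/-- Sequential composition, as a non-deterministic (in fact, partial deterministic)
operation on `M^P`: the singleton of `x ⊙ y` when defined, and `∅` otherwise. -/
noncomputable def mpOdot {Val Var : Type} (x y : MP Val Var) : Set (MP Val Var) :=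
  {z | x.1.ran = y.1.dom ∧ z.1 = rodot x.1 y.1}

/-!
Everything reduces to an algebra of kernels: `⊕` is commutative and associative, `⊙` is
associative with the identity kernels as units, `unit_R ⊕ unit_S = unit_(R ∪ S)`, and, for
input-preserving kernels, the exchange law `(a ⊙ b) ⊕ (c ⊙ d) = (a ⊕ c) ⊙ (b ⊕ d)` holds
whenever its left side is defined. Each frame condition is then a short rewriting with these
laws; for instance `y ⊑ y ⊕ e` because `y ⊕ e = (y ⊙ unit) ⊕ (unit ⊙ e)`. The definedness
side conditions are bookkeeping with domains and ranges.
-/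

section KernelAlgebra

variable {Val Var : Type}

theorem RKernel.ext_of_mem_iff {K1 K2 : RKernel Val Var} (hd : K1.dom = K2.dom)
    (hr : K1.ran = K2.ran)
    (hf : ∀ m r, r ∈ K1.f m ↔ restr hr.ge r ∈ K2.f (restr hd.ge m)) : K1 = K2 := by
  obtain ⟨d1, r1, f1⟩ := K1
  obtain ⟨d2, r2, f2⟩ := K2
  dsimp only at hd hr hf
  subst hd hr
  simp only [RKernel.mk.injEq, heq_eq_eq, true_and]
  funext m
  ext r
  exact hf m r

theorem Mem.ext_union {S T : Set Var} {m n : Mem Val Var (S ∪ T)}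
    (hS : restr Set.subset_union_left m = restr Set.subset_union_left n)
    (hT : restr Set.subset_union_right m = restr Set.subset_union_right n) : m = n := by
  funext ⟨i, hi⟩
  rcases hi with hiS | hiT
  · exact congrFun hS ⟨i, hiS⟩
  · exact congrFun hT ⟨i, hiT⟩

open Classical in
/-- The memory `m1 ⊗ m2`; where the two disagree it reads `m1`. -/
noncomputable def Mem.join {S T : Set Var} (m1 : Mem Val Var S) (m2 : Mem Val Var T) :
    Mem Val Var (S ∪ T) :=
  fun t => if h : t.1 ∈ S then m1 ⟨t.1, h⟩ else m2 ⟨t.1, t.2.resolve_left h⟩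

theorem Mem.restr_join_left {S T : Set Var} (m1 : Mem Val Var S) (m2 : Mem Val Var T) :
    restr Set.subset_union_left (m1.join m2) = m1 := by
  funext t
  exact dif_pos t.2

theorem Mem.restr_join_right {S T : Set Var} {m1 : Mem Val Var S} {m2 : Mem Val Var T}
    (h : Agree m1 m2) : restr Set.subset_union_right (m1.join m2) = m2 := by
  funext ⟨i, hi⟩
  by_cases hiS : i ∈ S
  · simpa [restr, Mem.join, hiS] using h i hiS hi
  · simp [restr, Mem.join, hiS]

theorem rodot_f_of_eq {K1 K2 : RKernel Val Var} (h : K1.ran = K2.dom) (d) :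
    (rodot K1 K2).f d = {v | ∃ u ∈ K1.f d, v ∈ K2.f (restr h.ge u)} :=
  dif_pos h

theorem mem_rodot_f_of_eq {K1 K2 : RKernel Val Var} (h : K1.ran = K2.dom) {d v} :
    v ∈ (rodot K1 K2).f d ↔ ∃ u ∈ K1.f d, v ∈ K2.f (restr h.ge u) := by
  rw [rodot_f_of_eq h]
  rfl

theorem roplus_comm (K1 K2 : RKernel Val Var) : roplus K1 K2 = roplus K2 K1 :=
  RKernel.ext_of_mem_iff (Set.union_comm _ _) (Set.union_comm _ _) fun _ _ => And.comm

theorem roplus_assoc (K1 K2 K3 : RKernel Val Var) :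
    roplus (roplus K1 K2) K3 = roplus K1 (roplus K2 K3) :=
  RKernel.ext_of_mem_iff (Set.union_assoc _ _ _) (Set.union_assoc _ _ _) fun _ _ =>
    and_assoc

theorem roplus_roplus_roplus_comm (K1 K2 K3 K4 : RKernel Val Var) :
    roplus (roplus K1 K2) (roplus K3 K4) = roplus (roplus K1 K3) (roplus K2 K4) := by
  rw [roplus_assoc, ← roplus_assoc K2, roplus_comm K2 K3, roplus_assoc K3, ← roplus_assoc]

theorem unitR_roplus_unitR (R S : Set Var) :
    roplus (unitR Val Var R) (unitR Val Var S) = unitR Val Var (R ∪ S) :=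
  RKernel.ext_of_mem_iff rfl rfl fun _ _ =>
    ⟨fun ⟨hR, hS⟩ => Mem.ext_union hR hS, fun h => ⟨congrArg _ h, congrArg _ h⟩⟩

theorem roplus_unitR_empty (K : RKernel Val Var) : roplus K (unitR Val Var ∅) = K :=
  RKernel.ext_of_mem_iff (Set.union_empty _) (Set.union_empty _) fun _ _ =>
    ⟨fun h => h.1, fun h => ⟨h, funext fun t => absurd t.2 (Set.notMem_empty t.1)⟩⟩

theorem rodot_assoc {K1 K2 K3 : RKernel Val Var} (h12 : K1.ran = K2.dom)
    (h23 : K2.ran = K3.dom) : rodot (rodot K1 K2) K3 = rodot K1 (rodot K2 K3) := by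
  have h12_3 : (rodot K1 K2).ran = K3.dom := h23
  have h1_23 : K1.ran = (rodot K2 K3).dom := h12
  refine RKernel.ext_of_mem_iff rfl rfl fun m r => ?_
  constructor
  · intro hr
    obtain ⟨w, hw, hr⟩ := (mem_rodot_f_of_eq h12_3).1 hr
    obtain ⟨u, hu, hw⟩ := (mem_rodot_f_of_eq h12).1 hw
    exact (mem_rodot_f_of_eq h1_23).2 ⟨u, hu, (mem_rodot_f_of_eq h23).2 ⟨w, hw, hr⟩⟩
  · intro hr
    obtain ⟨u, hu, hr⟩ := (mem_rodot_f_of_eq h1_23).1 hr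
    obtain ⟨w, hw, hr⟩ := (mem_rodot_f_of_eq h23).1 hr
    exact (mem_rodot_f_of_eq h12_3).2 ⟨w, (mem_rodot_f_of_eq h12).2 ⟨u, hu, hw⟩, hr⟩

theorem unitR_rodot (K : RKernel Val Var) : rodot (unitR Val Var K.dom) K = K :=
  RKernel.ext_of_mem_iff rfl rfl fun m r => by
    rw [rodot_f_of_eq rfl]
    exact ⟨fun ⟨_, hu, h⟩ => (show _ = m from hu) ▸ h, fun h => ⟨m, rfl, h⟩⟩

theorem rodot_unitR (K : RKernel Val Var) : rodot K (unitR Val Var K.ran) = K :=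
  RKernel.ext_of_mem_iff rfl rfl fun m r => by
    rw [rodot_f_of_eq rfl]
    exact ⟨fun ⟨_, hu, h⟩ => (show r = _ from h) ▸ hu, fun h => ⟨r, h, rfl⟩⟩

end KernelAlgebra

section Definedness

variable {Val Var : Type} {a b c d : RKernel Val Var}

theorem ROplusDef.symm (h : ROplusDef a b) : ROplusDef b a := by
  rw [ROplusDef, Set.inter_comm, h, Set.inter_comm]

theorem rOplusDef_unitR_empty (a : RKernel Val Var) : ROplusDef a (unitR Val Var ∅) := by
  simp only [ROplusDef, unitR, Set.inter_empty]

theorem rOplusDef_unitR_dom (ha : a.dom ⊆ a.ran) : ROplusDef (unitR Val Var a.dom) a := by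
  simp only [ROplusDef, unitR, Set.inter_eq_left.mpr ha, Set.inter_self]

theorem ROplusDef.of_rodot (ha : a.dom ⊆ a.ran) (hb : b.dom ⊆ b.ran) (hc : c.dom ⊆ c.ran)
    (hd : d.dom ⊆ d.ran) (hab : a.ran = b.dom) (hcd : c.ran = d.dom)
    (h : ROplusDef (rodot a b) (rodot c d)) : ROplusDef a c ∧ ROplusDef b d := by
  simp only [ROplusDef, rodot, Set.ext_iff, Set.subset_def, Set.mem_inter_iff] at *
  grind

theorem ROplusDef.assoc (ha : a.dom ⊆ a.ran) (hb : b.dom ⊆ b.ran) (hab : ROplusDef a b)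
    (habc : ROplusDef (roplus a b) c) :
    ROplusDef b c ∧ ROplusDef a (roplus b c) := by
  simp only [ROplusDef, roplus, Set.ext_iff, Set.subset_def, Set.mem_inter_iff,
    Set.mem_union] at *
  grind

theorem ROplusDef.roplus_roplus_comm (h : ROplusDef (roplus a b) (roplus c d))
    (ha : a.dom ⊆ a.ran) (hb : b.dom ⊆ b.ran) (hc : c.dom ⊆ c.ran) (hd : d.dom ⊆ d.ran)
    (hab : ROplusDef a b) (hcd : ROplusDef c d) :
    ROplusDef a c ∧ ROplusDef (roplus a c) (roplus b d) := by
  simp only [ROplusDef, roplus, Set.ext_iff, Set.subset_def, Set.mem_inter_iff,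
    Set.mem_union] at *
  grind

end Definedness

section InputPreserving

variable {Val Var : Type}

theorem margS_eq_singleton {S U : Set Var} (h : S ⊆ U) {R : Set (Mem Val Var U)}
    {d : Mem Val Var S} (hne : R.Nonempty) (hres : ∀ m ∈ R, restr h m = d) :
    margS R S = {d} := by
  ext r
  constructor
  · rintro ⟨m, hm, hag⟩
    funext t
    rw [← hres m hm]
    exact (hag t.1 (h t.2) t.2).symm
  · rintro rfl
    obtain ⟨m, hm⟩ := hne
    exact ⟨m, hm, fun i h1 h2 => by rw [← hres m hm]; rfl⟩

theorem InMP.restr_of_mem {K : RKernel Val Var} (hK : InMP K) {d m} (hm : m ∈ K.f d) :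
    restr hK.1 m = d := by
  have : restr hK.1 m ∈ margS (K.f d) K.dom := ⟨m, hm, fun _ _ _ => rfl⟩
  rwa [hK.2 d] at this

theorem InMP.nonempty {K : RKernel Val Var} (hK : InMP K) (d) : (K.f d).Nonempty := by
  have : d ∈ margS (K.f d) K.dom := by rw [hK.2 d]; rfl
  obtain ⟨m, hm, -⟩ := this
  exact ⟨m, hm⟩

theorem inMP_unitR (R : Set Var) : InMP (unitR Val Var R) :=
  ⟨subset_rfl, fun d => margS_eq_singleton subset_rfl ⟨d, rfl⟩ fun _ hm => hm⟩

/-- On the overlap of the ranges, both kernels copy their common input. -/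
theorem ROplusDef.agree {K1 K2 : RKernel Val Var} (hD : ROplusDef K1 K2) (h1 : InMP K1)
    (h2 : InMP K2) {d : Mem Val Var (K1.dom ∪ K2.dom)} {m1 m2}
    (hm1 : m1 ∈ K1.f (restr Set.subset_union_left d))
    (hm2 : m2 ∈ K2.f (restr Set.subset_union_right d)) : Agree m1 m2 := by
  intro i hi1 hi2
  have hi : i ∈ K1.dom ∩ K2.dom := hD ▸ ⟨hi1, hi2⟩
  calc m1 ⟨i, hi1⟩ = d ⟨i, Or.inl hi.1⟩ := congrFun (h1.restr_of_mem hm1) ⟨i, hi.1⟩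
    _ = m2 ⟨i, hi2⟩ := (congrFun (h2.restr_of_mem hm2) ⟨i, hi.2⟩).symm

theorem InMP.roplus {K1 K2 : RKernel Val Var} (h1 : InMP K1) (h2 : InMP K2)
    (hD : ROplusDef K1 K2) : InMP (roplus K1 K2) := by
  have hsub : K1.dom ∪ K2.dom ⊆ K1.ran ∪ K2.ran := Set.union_subset_union h1.1 h2.1
  refine ⟨hsub, fun d => margS_eq_singleton hsub ?_ fun m ⟨hm1, hm2⟩ => ?_⟩
  · obtain ⟨m1, hm1⟩ := h1.nonempty (restr Set.subset_union_left d)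
    obtain ⟨m2, hm2⟩ := h2.nonempty (restr Set.subset_union_right d)
    refine ⟨m1.join m2, ?_, ?_⟩
    · show restr _ (m1.join m2) ∈ _
      rwa [Mem.restr_join_left]
    · show restr _ (m1.join m2) ∈ _
      rwa [Mem.restr_join_right (hD.agree h1 h2 hm1 hm2)]
  · exact Mem.ext_union (h1.restr_of_mem hm1) (h2.restr_of_mem hm2)

theorem InMP.rodot {K1 K2 : RKernel Val Var} (h1 : InMP K1) (h2 : InMP K2)
    (h : K1.ran = K2.dom) : InMP (rodot K1 K2) := by
  have hsub : K1.dom ⊆ K2.ran := (h1.1.trans h.subset).trans h2.1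
  refine ⟨hsub, fun d => margS_eq_singleton hsub ?_ fun v hv => ?_⟩
  · obtain ⟨u, hu⟩ := h1.nonempty d
    obtain ⟨v, hv⟩ := h2.nonempty (restr h.ge u)
    exact ⟨v, (mem_rodot_f_of_eq h).2 ⟨u, hu, hv⟩⟩
  · obtain ⟨u, hu, hv⟩ := (mem_rodot_f_of_eq h).1 hv
    funext t
    exact (congrFun (h2.restr_of_mem hv) ⟨t.1, h ▸ h1.1 t.2⟩).trans
      (congrFun (h1.restr_of_mem hu) t)

theorem roplus_rodot_rodot {a b c d : RKernel Val Var} (ha : InMP a) (hb : InMP b)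
    (hc : InMP c) (hd : InMP d) (hab : a.ran = b.dom) (hcd : c.ran = d.dom)
    (h : ROplusDef (rodot a b) (rodot c d)) :
    roplus (rodot a b) (rodot c d) = rodot (roplus a c) (roplus b d) := by
  have hac : ROplusDef a c := (h.of_rodot ha.1 hb.1 hc.1 hd.1 hab hcd).1
  have hacbd : (roplus a c).ran = (roplus b d).dom := congrArg₂ (· ∪ ·) hab hcd
  refine RKernel.ext_of_mem_iff rfl rfl fun m r => ?_
  rw [mem_rodot_f_of_eq hacbd]
  constructor
  · rintro ⟨hr1, hr2⟩
    obtain ⟨u1, hu1, hv1⟩ := (mem_rodot_f_of_eq hab).1 hr1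
    obtain ⟨u2, hu2, hv2⟩ := (mem_rodot_f_of_eq hcd).1 hr2
    have hag := hac.agree ha hc hu1 hu2
    refine ⟨u1.join u2, ⟨?_, ?_⟩, ?_, ?_⟩
    · rwa [Mem.restr_join_left]
    · rwa [Mem.restr_join_right hag]
    · rwa [← Mem.restr_join_left u1 u2] at hv1
    · rwa [← Mem.restr_join_right hag] at hv2
  · rintro ⟨u, ⟨hu1, hu2⟩, hv1, hv2⟩
    exact ⟨(mem_rodot_f_of_eq hab).2 ⟨_, hu1, hv1⟩, (mem_rodot_f_of_eq hcd).2 ⟨_, hu2, hv2⟩⟩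

theorem roplus_unitR_dom {K : RKernel Val Var} (hK : InMP K) :
    roplus K (unitR Val Var K.dom) = K :=
  RKernel.ext_of_mem_iff (Set.union_self _) (Set.union_eq_left.mpr hK.1) fun _ _ =>
    ⟨fun h => h.1, fun h => ⟨h, hK.restr_of_mem h⟩⟩

end InputPreserving

section Order

variable {Val Var : Type}

theorem unitR_rodot_unitR (R : Set Var) :
    rodot (unitR Val Var R) (unitR Val Var R) = unitR Val Var R :=
  unitR_rodot (unitR Val Var R)

theorem rle_rodot {x h : RKernel Val Var} (hh : InMP h) (hxh : x.ran = h.dom) :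
    rle x (rodot x h) :=
  ⟨∅, h, hh, rOplusDef_unitR_empty x, (Set.union_empty _).trans hxh,
    by rw [roplus_unitR_empty]⟩

theorem rle_roplus_unitR {x : RKernel Val Var} {R : Set Var}
    (hxR : ROplusDef x (unitR Val Var R)) : rle x (roplus x (unitR Val Var R)) :=
  ⟨R, unitR Val Var (x.ran ∪ R), inMP_unitR _, hxR, rfl, (rodot_unitR _).symm⟩

theorem rle_refl (x : RKernel Val Var) : rle x x := by
  have := rle_rodot (x := x) (inMP_unitR x.ran) rfl
  rwa [rodot_unitR] at this

theorem rle_trans {x y z : RKernel Val Var} (hx : InMP x) (hxy : rle x y) (hyz : rle y z) :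
    rle x z := by
  obtain ⟨R, h, hh, hxR, hxh, rfl⟩ := hxy
  obtain ⟨S, h', hh', hyS, hyh', rfl⟩ := hyz
  have hx1 := hx.roplus (inMP_unitR R) hxR
  -- write `unit_S` as `unit_S ⊙ unit_S` to bring the exchange law into play
  have hyS' : ROplusDef (rodot (roplus x (unitR Val Var R)) h)
      (rodot (unitR Val Var S) (unitR Val Var S)) := by
    rwa [unitR_rodot_unitR]
  obtain ⟨hx1S, hhS⟩ := hyS'.of_rodot hx1.1 hh.1 subset_rfl subset_rfl hxh rfl
  have hxRS : ROplusDef x (unitR Val Var (R ∪ S)) := by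
    rw [← unitR_roplus_unitR]
    exact (hxR.assoc hx.1 subset_rfl hx1S).2
  have hRS : (roplus x (unitR Val Var (R ∪ S))).ran = (roplus h (unitR Val Var S)).dom :=
    (Set.union_assoc _ _ _).symm.trans (congrArg (· ∪ S) hxh)
  refine ⟨R ∪ S, rodot (roplus h (unitR Val Var S)) h',
    (hh.roplus (inMP_unitR S) hhS).rodot hh' hyh', hxRS, hRS, ?_⟩
  calc rodot (roplus (rodot (roplus x (unitR Val Var R)) h) (unitR Val Var S)) h'
      = rodot (roplus (rodot (roplus x (unitR Val Var R)) h)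
          (rodot (unitR Val Var S) (unitR Val Var S))) h' := by rw [unitR_rodot_unitR]
    _ = rodot (rodot (roplus (roplus x (unitR Val Var R)) (unitR Val Var S))
          (roplus h (unitR Val Var S))) h' := by
        rw [roplus_rodot_rodot hx1 hh (inMP_unitR S) (inMP_unitR S) hxh rfl hyS']
    _ = rodot (rodot (roplus x (unitR Val Var (R ∪ S))) (roplus h (unitR Val Var S))) h' := by
        rw [roplus_assoc, unitR_roplus_unitR]
    _ = rodot (roplus x (unitR Val Var (R ∪ S))) (rodot (roplus h (unitR Val Var S)) h') :=
        rodot_assoc hRS hyh'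

end Order

namespace MP

variable {Val Var : Type}

theorem oplus_down {x y z x' y' : MP Val Var} (hz : z ∈ mpOplus x y) (hx : rle x'.1 x.1)
    (hy : rle y'.1 y.1) : ∃ z', rle z'.1 z.1 ∧ z' ∈ mpOplus x' y' := by
  obtain ⟨hxy, hz⟩ := hz
  obtain ⟨R, h, hh, hxR, hxh, hx⟩ := hx
  obtain ⟨S, h', hh', hyS, hyh', hy⟩ := hy
  rw [hx, hy] at hxy hz
  have hx1 := x'.2.roplus (inMP_unitR R) hxR
  have hy1 := y'.2.roplus (inMP_unitR S) hyS
  obtain ⟨hxy1, hhh'⟩ := hxy.of_rodot hx1.1 hh.1 hy1.1 hh'.1 hxh hyh'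
  obtain ⟨hx'y', hRS⟩ := hxy1.roplus_roplus_comm x'.2.1 subset_rfl y'.2.1 subset_rfl hxR hyS
  rw [unitR_roplus_unitR] at hRS
  refine ⟨⟨roplus x'.1 y'.1, x'.2.roplus y'.2 hx'y'⟩,
    ⟨R ∪ S, roplus h h', hh.roplus hh' hhh', hRS, ?_, ?_⟩, hx'y', rfl⟩
  · exact (Set.union_union_union_comm _ _ _ _).trans (congrArg₂ (· ∪ ·) hxh hyh')
  · rw [hz, roplus_rodot_rodot hx1 hh hy1 hh' hxh hyh' hxy, roplus_roplus_roplus_comm,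
      unitR_roplus_unitR]

theorem odot_up {x y z z' : MP Val Var} (hz : z ∈ mpOdot x y) (hzz' : rle z.1 z'.1) :
    ∃ x' y', rle x.1 x'.1 ∧ rle y.1 y'.1 ∧ z' ∈ mpOdot x' y' := by
  obtain ⟨hxy, hz⟩ := hz
  obtain ⟨R, h, hh, hzR, hzh, hz'⟩ := hzz'
  rw [hz] at hzR hzh hz'
  rw [← unitR_rodot_unitR R] at hzR
  obtain ⟨hxR, hyR⟩ := hzR.of_rodot x.2.1 y.2.1 subset_rfl subset_rfl hxy rfl
  have hxRyR : (roplus x.1 (unitR Val Var R)).ran = (roplus y.1 (unitR Val Var R)).dom :=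
    congrArg (· ∪ R) hxy
  refine ⟨⟨roplus x.1 (unitR Val Var R), x.2.roplus (inMP_unitR R) hxR⟩,
    ⟨rodot (roplus y.1 (unitR Val Var R)) h, (y.2.roplus (inMP_unitR R) hyR).rodot hh hzh⟩,
    rle_roplus_unitR hxR, ⟨R, h, hh, hyR, hzh, rfl⟩, hxRyR, ?_⟩
  calc z'.1 = rodot (roplus (rodot x.1 y.1)
        (rodot (unitR Val Var R) (unitR Val Var R))) h := by rw [hz', unitR_rodot_unitR]
    _ = rodot (rodot (roplus x.1 (unitR Val Var R)) (roplus y.1 (unitR Val Var R))) h := by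
        rw [roplus_rodot_rodot x.2 y.2 (inMP_unitR R) (inMP_unitR R) hxy rfl hzR]
    _ = rodot (roplus x.1 (unitR Val Var R)) (rodot (roplus y.1 (unitR Val Var R)) h) :=
        rodot_assoc hxRyR hzh

theorem oplus_comm {x y z : MP Val Var} (hz : z ∈ mpOplus x y) : z ∈ mpOplus y x :=
  ⟨hz.1.symm, hz.2.trans (roplus_comm _ _)⟩

theorem oplus_assoc {x y z t w : MP Val Var} (hw : w ∈ mpOplus t z) (ht : t ∈ mpOplus x y) :
    ∃ s, s ∈ mpOplus y z ∧ w ∈ mpOplus x s := by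
  obtain ⟨htz, hw⟩ := hw
  obtain ⟨hxy, ht⟩ := ht
  rw [ht] at htz hw
  obtain ⟨hyz, hx_yz⟩ := hxy.assoc x.2.1 y.2.1 htz
  exact ⟨⟨roplus y.1 z.1, y.2.roplus z.2 hyz⟩, ⟨hyz, rfl⟩, hx_yz, hw.trans (roplus_assoc _ _ _)⟩

theorem oplus_unit_exists (x : MP Val Var) :
    ∃ e ∈ (Set.univ : Set (MP Val Var)), x ∈ mpOplus e x :=
  ⟨⟨unitR Val Var x.1.dom, inMP_unitR _⟩, trivial, rOplusDef_unitR_dom x.2.1,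
    ((roplus_comm _ _).trans (roplus_unitR_dom x.2)).symm⟩

theorem oplus_unit_coherence {e x y : MP Val Var} (hx : x ∈ mpOplus y e) : rle y.1 x.1 := by
  obtain ⟨hye, hx⟩ := hx
  have hye' : ROplusDef (rodot y.1 (unitR Val Var y.1.ran))
      (rodot (unitR Val Var e.1.dom) e.1) := by
    rwa [rodot_unitR, unitR_rodot]
  obtain ⟨hyE, hYe⟩ := hye'.of_rodot y.2.1 subset_rfl subset_rfl e.2.1 rfl rfl
  refine ⟨e.1.dom, roplus (unitR Val Var y.1.ran) e.1, (inMP_unitR _).roplus e.2 hYe, hyE,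
    rfl, ?_⟩
  rw [hx, ← roplus_rodot_rodot y.2 (inMP_unitR _) (inMP_unitR _) e.2 rfl rfl hye',
    rodot_unitR, unitR_rodot]

theorem odot_assoc {x y z w : MP Val Var} :
    (∃ t, w ∈ mpOdot t z ∧ t ∈ mpOdot x y) ↔ ∃ s, s ∈ mpOdot y z ∧ w ∈ mpOdot x s := by
  constructor
  · rintro ⟨t, ⟨htz, hw⟩, hxy, ht⟩
    rw [ht] at htz hw
    exact ⟨⟨rodot y.1 z.1, y.2.rodot z.2 htz⟩, ⟨htz, rfl⟩, hxy, hw.trans (rodot_assoc hxy htz)⟩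
  · rintro ⟨s, ⟨hyz, hs⟩, hxs, hw⟩
    rw [hs] at hxs hw
    exact ⟨⟨rodot x.1 y.1, x.2.rodot y.2 hxs⟩,
      ⟨hyz, hw.trans (rodot_assoc (K2 := y.1) hxs hyz).symm⟩, hxs, rfl⟩

theorem odot_unit_exists_left (x : MP Val Var) :
    ∃ e ∈ (Set.univ : Set (MP Val Var)), x ∈ mpOdot e x :=
  ⟨⟨unitR Val Var x.1.dom, inMP_unitR _⟩, trivial, rfl, (unitR_rodot x.1).symm⟩

theorem odot_unit_exists_right (x : MP Val Var) :
    ∃ e ∈ (Set.univ : Set (MP Val Var)), x ∈ mpOdot x e :=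
  ⟨⟨unitR Val Var x.1.ran, inMP_unitR _⟩, trivial, rfl, (rodot_unitR x.1).symm⟩

theorem odot_coherence_right {e x y : MP Val Var} (hx : x ∈ mpOdot y e) : rle y.1 x.1 :=
  hx.2 ▸ rle_rodot e.2 hx.1

theorem rev_exchange {x y z y1 y2 z1 z2 : MP Val Var} (hx : x ∈ mpOplus y z)
    (hy : y ∈ mpOdot y1 y2) (hz : z ∈ mpOdot z1 z2) :
    ∃ u v, u ∈ mpOplus y1 z1 ∧ v ∈ mpOplus y2 z2 ∧ x ∈ mpOdot u v := by
  obtain ⟨hyz, hx⟩ := hx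
  obtain ⟨hy12, hy⟩ := hy
  obtain ⟨hz12, hz⟩ := hz
  rw [hy, hz] at hyz hx
  obtain ⟨h1, h2⟩ := hyz.of_rodot y1.2.1 y2.2.1 z1.2.1 z2.2.1 hy12 hz12
  exact ⟨⟨_, y1.2.roplus z1.2 h1⟩, ⟨_, y2.2.roplus z2.2 h2⟩, ⟨h1, rfl⟩, ⟨h2, rfl⟩,
    congrArg₂ (· ∪ ·) hy12 hz12,
    hx.trans (roplus_rodot_rodot y1.2 y2.2 z1.2 z2.2 hy12 hz12 hyz)⟩

end MP

theorem MP_isDIBIFrame_general (Val Var : Type) :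
    IsDIBIFrame (fun x y : MP Val Var => rle x.1 y.1) mpOplus mpOdot
      (Set.univ : Set (MP Val Var)) :=
  { le_refl x := rle_refl x.1
    le_trans x _ _ := rle_trans x.2
    oplus_down _ _ _ _ _ := MP.oplus_down
    odot_up _ _ _ _ := MP.odot_up
    oplus_comm _ _ _ := MP.oplus_comm
    oplus_assoc _ _ _ _ _ := MP.oplus_assoc
    oplus_unit_exists := MP.oplus_unit_exists
    oplus_unit_coherence _ _ _ _ := MP.oplus_unit_coherence
    odot_assoc _ _ _ _ := MP.odot_assoc
    odot_unit_exists_left := MP.odot_unit_exists_left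
    odot_unit_exists_right := MP.odot_unit_exists_right
    odot_coherence_right _ _ _ _ := MP.odot_coherence_right
    unit_closure _ _ _ _ := trivial
    rev_exchange _ _ _ _ _ _ _ := MP.rev_exchange }

/-- **The relational model is a DIBI frame.** The structure `(M^P, ⊑, ⊕, ⊙, M^P)`
of input-preserving powerset kernels, with parallel and sequential composition and
with every state a unit, satisfies all twelve DIBI frame conditions (in particular,
`⊑` is a preorder on `M^P`). -/
theorem MP_isDIBIFrame (Val Var : Type) [Fintype Val] [Fintype Var] :
    IsDIBIFrame (fun x y : MP Val Var => rle x.1 y.1) mpOplus mpOdot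
      (Set.univ : Set (MP Val Var)) :=
  MP_isDIBIFrame_general Val Var
end
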